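/- arXiv:1903.03502 — 5 statements merged into one kernel-verified Lean document; each statement's English description precedes it below -/
import Mathlib

section
/- Fix an integer n ≥ 1 and a constant c > 0. Let β : (0,∞) → ℝ be a differentiable function with β′(r) = −(1 + c r^{2n−2})^{−1/2} for all r > 0. Then −1 < β′(r) < 0, β is twice differentiable, and β′′(r)/(1 − (β′(r))²) + (n−1)β′(r)/r = 0 for all r > 0. Equivalently, the rotationally symmetric function b(x) = β(|x|) on ℝⁿ∖{0} satisfies the Euclidean maximal spacelike hypersurface equation (δ^{ij} + b_i b_j/(1 − |∇b|²)) b_{ij} = 0, where b_i = ∂_i b, b_{ij} = ∂_i∂_j b and |∇b|² = Σ_i b_i². -/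
/-!
Write `u = c r^k` with `k = 2n - 2` and `φ = -(1 + u)^{-1/2}` for the prescribed slope `β'`.
Since `r u' = k u`, the chain rule gives `φ' = k u / (2 r (1 + u)^{3/2})`, while `1 - φ² = u / (1 + u)`;
hence `φ' / (1 - φ²) = -(k/2) φ / r = -(n - 1) φ / r`, which is the maximal hypersurface equation.
-/

noncomputable def maximalProfileSlope (c : ℝ) (k : ℕ) (r : ℝ) : ℝ := -(√(1 + c * r ^ k))⁻¹

lemma neg_inv_sqrt_one_add_mem_Ioo {a : ℝ} (ha : 0 < a) : -(√(1 + a))⁻¹ ∈ Set.Ioo (-1) 0 := by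
  have hS : 1 < √(1 + a) := (Real.lt_sqrt zero_le_one).2 (by linarith)
  constructor
  · linarith [inv_lt_one_of_one_lt₀ hS]
  · simpa using hS.trans' zero_lt_one

lemma one_sub_neg_inv_sqrt_one_add_sq {a : ℝ} (ha : 0 < 1 + a) :
    1 - (-(√(1 + a))⁻¹) ^ 2 = a / (1 + a) := by
  rw [neg_sq, inv_pow, Real.sq_sqrt ha.le]
  field_simp
  ring

lemma natCast_mul_pow_pred (k : ℕ) (r : ℝ) : (k : ℝ) * r ^ (k - 1) * r = k * r ^ k := by
  cases k with
  | zero => simp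
  | succ k => rw [Nat.add_sub_cancel, mul_assoc, ← pow_succ]

lemma hasDerivAt_maximalProfileSlope {c : ℝ} {k : ℕ} {r : ℝ} (hr : r ≠ 0)
    (h : 0 < 1 + c * r ^ k) :
    HasDerivAt (maximalProfileSlope c k)
      (-(k / 2) * (1 - maximalProfileSlope c k r ^ 2) * maximalProfileSlope c k r / r) r := by
  have hS : 0 < √(1 + c * r ^ k) := Real.sqrt_pos.2 h
  have hu : HasDerivAt (fun x ↦ 1 + c * x ^ k) (c * (k * r ^ (k - 1))) r :=
    ((hasDerivAt_pow k r).const_mul c).const_add 1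
  refine ((hu.sqrt h.ne').inv hS.ne').neg.congr_deriv ?_
  unfold maximalProfileSlope
  rw [one_sub_neg_inv_sqrt_one_add_sq h]
  have hkr := natCast_mul_pow_pred k r
  have hSsq := Real.sq_sqrt h.le
  field_simp
  linear_combination c * (1 + c * r ^ k) * hkr - c * k * r ^ k * hSsq

theorem stmt_1 (n : ℕ) (hn : 1 ≤ n) (c : ℝ) (hc : 0 < c) (β : ℝ → ℝ)
    (hβ : ∀ r : ℝ, 0 < r →
      HasDerivAt β (-(Real.sqrt (1 + c * r ^ (2 * n - 2)))⁻¹) r) :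
    ∀ r : ℝ, 0 < r →
      (-1 < deriv β r ∧ deriv β r < 0) ∧
      ∃ d : ℝ, HasDerivAt (deriv β) d r ∧
        d / (1 - deriv β r ^ 2) + ((n : ℝ) - 1) * deriv β r / r = 0 := by
  intro r hr
  set k := 2 * n - 2
  have hslope : ∀ s, 0 < s → deriv β s = maximalProfileSlope c k s :=
    fun s hs ↦ (hβ s hs).deriv
  have hu : 0 < c * r ^ k := by positivity
  obtain ⟨hlow, hhigh⟩ : maximalProfileSlope c k r ∈ Set.Ioo (-1) 0 :=
    neg_inv_sqrt_one_add_mem_Ioo hu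
  have hderiv2 := (hasDerivAt_maximalProfileSlope hr.ne' (by linarith)).congr_of_eventuallyEq
    (Filter.eventually_of_mem (Ioi_mem_nhds hr) hslope)
  have hk : (k : ℝ) = 2 * ((n : ℝ) - 1) := by
    rw [Nat.cast_sub (by omega)]
    push_cast
    ring
  rw [hslope r hr]
  refine ⟨⟨hlow, hhigh⟩, _, hderiv2, ?_⟩
  have hne : 1 - maximalProfileSlope c k r ^ 2 ≠ 0 := by nlinarith
  rw [hk]
  field_simp
  ring
end

section
/- Fix an integer n ≥ 3 and r₀ > 0. Let b : (0,∞) → ℝ be differentiable with b′(r) = −(1 + (r/r₀)^{2n−3})^{−1/2} for all r > 0. Then the rotationally symmetric function x ↦ b(|x|) on ℝⁿ∖{0} satisfies (δ^{ij} + b_i b_j/(1 − |∇b|²)) b_{ij} = b′(|x|)/(2|x|) < 0; in particular, b(|x|) is a strict static supersolution of the Euclidean graphical mean curvature flow. -/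
/-!
With `u = 1 + (r/r₀)^m` the slope is `s = -u^{-1/2}`, so `1 - s² = (u - 1)/u` and
`u' = m (u - 1)/r`; hence `s' = -(m/2r) s (1 - s²)`. The radial operator becomes
`s'/(1 - s²) + (n-1) s/r = (2(n-1) - m) s/(2r)`, which is `s/(2r)` exactly for `m = 2n - 3`.
-/

open Filter Topology

noncomputable def radialSlope (r₀ : ℝ) (m : ℕ) (r : ℝ) : ℝ :=
  -(Real.sqrt (1 + (r / r₀) ^ m))⁻¹

lemma radialSlope_neg (r₀ : ℝ) (m : ℕ) {r : ℝ} (hr : 0 < r) (hr₀ : 0 < r₀) :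
    radialSlope r₀ m r < 0 := by
  unfold radialSlope
  have : 0 < 1 + (r / r₀) ^ m := by positivity
  simpa using Real.sqrt_pos.mpr this

lemma radialSlope_sq (r₀ : ℝ) (m : ℕ) {r : ℝ} (hr : 0 < r) (hr₀ : 0 < r₀) :
    radialSlope r₀ m r ^ 2 = (1 + (r / r₀) ^ m)⁻¹ := by
  rw [radialSlope, neg_sq, inv_pow, Real.sq_sqrt (by positivity)]

lemma radialSlope_sq_lt_one (r₀ : ℝ) (m : ℕ) {r : ℝ} (hr : 0 < r) (hr₀ : 0 < r₀) :
    radialSlope r₀ m r ^ 2 < 1 := by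
  rw [radialSlope_sq r₀ m hr hr₀]
  exact inv_lt_one_of_one_lt₀ (lt_add_of_pos_right 1 (by positivity))

lemma natCast_mul_pow_sub_one_mul {R : Type*} [CommSemiring R] (m : ℕ) (t : R) :
    (m : R) * t ^ (m - 1) * t = m * t ^ m := by
  cases m with
  | zero => simp
  | succ k => simp [pow_succ, mul_assoc]

lemma hasDerivAt_radialSlope (m : ℕ) {r r₀ : ℝ} (hr : 0 < r) (hr₀ : 0 < r₀) :
    HasDerivAt (radialSlope r₀ m)
      (-(m / (2 * r)) * radialSlope r₀ m r * (1 - radialSlope r₀ m r ^ 2)) r := by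
  set t := r / r₀ with htr
  have hu : 0 < 1 + t ^ m := by positivity
  have hs : 0 < Real.sqrt (1 + t ^ m) := Real.sqrt_pos.mpr hu
  have hpow : HasDerivAt (fun x : ℝ => 1 + (x / r₀) ^ m) (m * t ^ (m - 1) * (1 / r₀)) r := by
    simpa using (((hasDerivAt_id r).div_const r₀).fun_pow m).const_add 1
  refine ((hpow.sqrt hu.ne').inv hs.ne').neg.congr_deriv ?_
  rw [radialSlope_sq r₀ m hr hr₀, radialSlope, ← htr]
  have ht : t ≠ 0 := (div_pos hr hr₀).ne'
  have hr : r = t * r₀ := (div_mul_cancel₀ r hr₀.ne').symm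
  have hpow_mul := natCast_mul_pow_sub_one_mul m t
  have hsq := Real.sq_sqrt hu.le
  set s := Real.sqrt (1 + t ^ m)
  clear_value s t
  rw [← hsq, hr]
  field_simp
  linear_combination hpow_mul - (m : ℝ) * hsq

theorem stmt_2 (n : ℕ) (hn : 3 ≤ n) (r₀ : ℝ) (hr₀ : 0 < r₀) (b : ℝ → ℝ)
    (hb : ∀ r : ℝ, 0 < r →
      HasDerivAt b (-(Real.sqrt (1 + (r / r₀) ^ (2 * n - 3)))⁻¹) r) :
    ∀ r : ℝ, 0 < r →
      ∃ d : ℝ, HasDerivAt (deriv b) d r ∧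
        d / (1 - deriv b r ^ 2) + ((n : ℝ) - 1) * deriv b r / r
          = deriv b r / (2 * r) ∧
        deriv b r / (2 * r) < 0 := by
  intro r hr
  have hslope : deriv b =ᶠ[𝓝 r] radialSlope r₀ (2 * n - 3) := by
    filter_upwards [lt_mem_nhds hr] with x hx using (hb x hx).deriv
  rw [hslope.eq_of_nhds]
  set s := radialSlope r₀ (2 * n - 3) r
  have hs : 1 - s ^ 2 ≠ 0 := (sub_pos.mpr (radialSlope_sq_lt_one r₀ _ hr hr₀)).ne'
  have hm : ((2 * n - 3 : ℕ) : ℝ) = 2 * n - 3 := by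
    rw [Nat.cast_sub (by omega)]
    push_cast
    ring
  refine ⟨_, (hasDerivAt_radialSlope _ hr hr₀).congr_of_eventuallyEq hslope, ?_,
    div_neg_of_neg_of_pos (radialSlope_neg r₀ _ hr hr₀) (by positivity)⟩
  rw [hm]
  field_simp
  ring
end

section
/- Let n ≥ 1, μ ∈ (0,1), α ≥ 0, t₀ < −1 and x₀ ∈ ℝⁿ, and set ρ = √((2−μ)/μ · 4n(−t₀)). Define b̂(x,t) = √(2n(t−t₀) + |x−x₀|²) + α t for (x,t) ∈ closure(B_ρ(x₀)) × [0,−t₀]. Then: (a) ∂_t b̂ − g^{ij}(δ,∇b̂) b̂_{ij} = α on B_ρ(x₀) × (0,−t₀), where b̂_{ij} = ∂_i∂_j b̂; (b) 1 − |∇b̂|² ≥ μ/4 on closure(B_ρ(x₀)) × [0,−t₀]; (c) for |x−x₀| = ρ and t ∈ [0,−t₀], the radial derivative satisfies ⟨∇b̂(x,t), (x−x₀)/|x−x₀|⟩ ≥ √(1 − μ/2). -/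
noncomputable section
open Real Set Filter

/-- Partial derivative of `f` at `x` in the `i`-th coordinate direction. -/
def pd {n : ℕ} (i : Fin n) (f : EuclideanSpace ℝ (Fin n) → ℝ) (x : EuclideanSpace ℝ (Fin n)) : ℝ :=
  fderiv ℝ f x (EuclideanSpace.single i 1)

/-- The shifted and tilted light-cone barrier `b̂(x,t) = √(2n(t−t₀)+|x−x₀|²) + αt`. -/
def bhat (n : ℕ) (t₀ α : ℝ) (x₀ : EuclideanSpace ℝ (Fin n)) (t : ℝ)
    (x : EuclideanSpace ℝ (Fin n)) : ℝ :=
  Real.sqrt (2 * n * (t - t₀) + ‖x - x₀‖ ^ 2) + α * t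

/-
Write `r = x - x₀`, `S = 2n(t - t₀)` and `q = √(S + |r|²)`. Then `∇b̂ = r / q`,
`b̂_ij = δ_ij / q - r_i r_j / q³`, `∂_t b̂ = n / q + α` and `1 - |∇b̂|² = S / q²`, so
`g^{ij} = δ_ij + r_i r_j / S`. Contracting with the Hessian, the `|r|²`-terms cancel because
`q² = S + |r|²`, leaving `n / q`: the untilted cone solves the flow and the tilt contributes
exactly `α`. Parts (b) and (c) follow from `|∇b̂|² = |r|² / (S + |r|²)`, which is increasing in
`|r|`, together with `2n(-t₀) ≤ S ≤ 4n(-t₀)` for `t ∈ [0, -t₀]`.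
-/
section Radial

variable {E : Type*} [NormedAddCommGroup E] [InnerProductSpace ℝ E] {c : ℝ}

lemma hasFDerivAt_sqrt_add_norm_sub_sq (hc : 0 < c) (x₀ x : E) :
    HasFDerivAt (fun y => √(c + ‖y - x₀‖ ^ 2))
      ((√(c + ‖x - x₀‖ ^ 2))⁻¹ • innerSL ℝ (x - x₀)) x := by
  refine (((hasFDerivAt_id x).sub_const x₀).norm_sq.const_add c).sqrt (by positivity)
    |>.congr_fderiv ?_
  ext v
  simp
  field_simp

lemma hasFDerivAt_inner_div_sqrt_add_norm_sub_sq (hc : 0 < c) (x₀ x w : E) :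
    HasFDerivAt (fun y => inner ℝ w (y - x₀) / √(c + ‖y - x₀‖ ^ 2))
      ((√(c + ‖x - x₀‖ ^ 2))⁻¹ • innerSL ℝ w -
        (inner ℝ w (x - x₀) / √(c + ‖x - x₀‖ ^ 2) ^ 3) • innerSL ℝ (x - x₀)) x := by
  have hq : 0 < √(c + ‖x - x₀‖ ^ 2) := by positivity
  have hnum := (innerSL ℝ w).hasFDerivAt.comp x ((hasFDerivAt_id x).sub_const x₀)
  have hinv := (hasDerivAt_inv hq.ne').comp_hasFDerivAt x
    (hasFDerivAt_sqrt_add_norm_sub_sq hc x₀ x)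
  refine (hnum.mul hinv).congr_fderiv ?_
  ext v
  simp
  field_simp
  ring

end Radial

section Coordinates

variable {n : ℕ} {c : ℝ}

lemma pd_sqrt_add_norm_sub_sq (hc : 0 < c) (x₀ x : EuclideanSpace ℝ (Fin n)) (i : Fin n) :
    pd i (fun y => √(c + ‖y - x₀‖ ^ 2)) x = (x i - x₀ i) / √(c + ‖x - x₀‖ ^ 2) := by
  rw [pd, (hasFDerivAt_sqrt_add_norm_sub_sq hc x₀ x).fderiv]
  simp [EuclideanSpace.inner_single_right, div_eq_inv_mul]

lemma pd_coord_div_sqrt_add_norm_sub_sq (hc : 0 < c) (x₀ x : EuclideanSpace ℝ (Fin n))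
    (i j : Fin n) :
    pd i (fun y => (y j - x₀ j) / √(c + ‖y - x₀‖ ^ 2)) x =
      (if i = j then 1 else 0) / √(c + ‖x - x₀‖ ^ 2) -
        (x i - x₀ i) * (x j - x₀ j) / √(c + ‖x - x₀‖ ^ 2) ^ 3 := by
  have hcoord : (fun y : EuclideanSpace ℝ (Fin n) => (y j - x₀ j) / √(c + ‖y - x₀‖ ^ 2)) =
      fun y => inner ℝ (EuclideanSpace.single j 1) (y - x₀) / √(c + ‖y - x₀‖ ^ 2) := by
    simp [EuclideanSpace.inner_single_left]
  rw [pd, hcoord, (hasFDerivAt_inner_div_sqrt_add_norm_sub_sq hc x₀ x _).fderiv]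
  simp [EuclideanSpace.inner_single_left, EuclideanSpace.inner_single_right]
  split_ifs <;> ring

lemma pd_add_const (i : Fin n) (f : EuclideanSpace ℝ (Fin n) → ℝ) (a : ℝ)
    (x : EuclideanSpace ℝ (Fin n)) : pd i (fun y => f y + a) x = pd i f x := by
  rw [pd, pd, fderiv_add_const]

end Coordinates

lemma EuclideanSpace.norm_sub_sq_eq_sum {n : ℕ} (x y : EuclideanSpace ℝ (Fin n)) :
    ‖x - y‖ ^ 2 = ∑ k, (x k - y k) ^ 2 := by
  simp [EuclideanSpace.norm_sq_eq]

section Algebra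

variable {ι : Type*} [Fintype ι] {r : ι → ℝ} {S q : ℝ}

lemma one_sub_sum_sq_div_eq (hq0 : q ≠ 0) (hq : q ^ 2 = S + ∑ k, r k ^ 2) :
    1 - ∑ k, (r k / q) ^ 2 = S / q ^ 2 := by
  simp only [div_pow, ← Finset.sum_div]
  field_simp
  linarith

lemma sum_sum_graphMetricInv_mul_hessian_cone [DecidableEq ι] (hS : 0 < S) (hq0 : 0 < q)
    (hq : q ^ 2 = S + ∑ k, r k ^ 2) :
    ∑ i, ∑ j, ((if i = j then 1 else 0) + r i / q * (r j / q) / (1 - ∑ k, (r k / q) ^ 2)) *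
        ((if i = j then 1 else 0) / q - r i * r j / q ^ 3) = Fintype.card ι / q := by
  rw [one_sub_sum_sq_div_eq hq0.ne' hq]
  have hterm : ∀ i j, ((if i = j then 1 else 0) + r i / q * (r j / q) / (S / q ^ 2)) *
      ((if i = j then 1 else 0) / q - r i * r j / q ^ 3) =
      (if i = j then 1 / q + r i ^ 2 * (1 / (S * q) - 1 / q ^ 3) else 0) -
        r i ^ 2 * r j ^ 2 / (S * q ^ 3) := by
    intro i j
    split_ifs with h
    · subst h; field_simp; ring
    · field_simp; ring
  simp only [hterm, Finset.sum_sub_distrib, Finset.sum_ite_eq, Finset.mem_univ, if_true,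
    ← Finset.sum_div, ← Finset.sum_mul_sum, Finset.sum_add_distrib, ← Finset.sum_mul,
    Finset.sum_const, Finset.card_univ, nsmul_eq_mul]
  field_simp
  linear_combination (∑ k, r k ^ 2) * hq

end Algebra

lemma div_four_le_div_add {μ T S R : ℝ} (hμ : 0 < μ) (hμ2 : μ ≤ 2) (hS : 0 < S)
    (hTS : T ≤ 2 * S) (hR : 0 ≤ R) (hRT : R ≤ (2 - μ) / μ * T) : μ / 4 ≤ S / (S + R) := by
  rw [le_div_iff₀ (by positivity)]
  rw [div_mul_eq_mul_div, le_div_iff₀ hμ] at hRT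
  nlinarith

lemma sqrt_one_sub_half_le {μ T S R : ℝ} (hμ : 0 < μ) (hμ2 : μ ≤ 2) (hS : 0 < S) (hST : S ≤ T)
    (hR : 0 ≤ R) (hRT : R ^ 2 = (2 - μ) / μ * T) : √(1 - μ / 2) ≤ R / √(S + R ^ 2) := by
  rw [← Real.sqrt_sq hR, ← Real.sqrt_div' _ (by positivity)]
  refine Real.sqrt_le_sqrt ?_
  rw [Real.sq_sqrt (sq_nonneg R), le_div_iff₀ (by positivity)]
  rw [div_mul_eq_mul_div, eq_div_iff hμ.ne'] at hRT
  nlinarith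

section Barrier

variable {n : ℕ} {t₀ α t : ℝ} (x₀ x : EuclideanSpace ℝ (Fin n))

lemma pd_bhat (ht : 0 < 2 * n * (t - t₀)) (i : Fin n) :
    pd i (bhat n t₀ α x₀ t) x = (x i - x₀ i) / √(2 * n * (t - t₀) + ‖x - x₀‖ ^ 2) := by
  rw [← pd_sqrt_add_norm_sub_sq ht]
  exact pd_add_const i _ (α * t) x

lemma pd_pd_bhat (ht : 0 < 2 * n * (t - t₀)) (i j : Fin n) :
    pd i (fun y => pd j (bhat n t₀ α x₀ t) y) x =
      (if i = j then 1 else 0) / √(2 * n * (t - t₀) + ‖x - x₀‖ ^ 2) -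
        (x i - x₀ i) * (x j - x₀ j) / √(2 * n * (t - t₀) + ‖x - x₀‖ ^ 2) ^ 3 := by
  simp only [pd_bhat _ _ ht]
  exact pd_coord_div_sqrt_add_norm_sub_sq ht x₀ x i j

lemma hasDerivAt_bhat_time (ht : 0 < 2 * n * (t - t₀) + ‖x - x₀‖ ^ 2) :
    HasDerivAt (fun s => bhat n t₀ α x₀ s x)
      (n / √(2 * n * (t - t₀) + ‖x - x₀‖ ^ 2) + α) t := by
  refine ((((((hasDerivAt_id' t).sub_const t₀).const_mul (2 * (n : ℝ))).add_const
    (‖x - x₀‖ ^ 2)).sqrt ht.ne').fun_add ((hasDerivAt_id' t).const_mul α)).congr_deriv ?_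
  field_simp

lemma sq_sqrt_add_norm_sub_sq_eq_sum (ht : 0 < 2 * n * (t - t₀)) :
    √(2 * n * (t - t₀) + ‖x - x₀‖ ^ 2) ^ 2 = 2 * n * (t - t₀) + ∑ k, (x k - x₀ k) ^ 2 := by
  rw [Real.sq_sqrt (by positivity), EuclideanSpace.norm_sub_sq_eq_sum]

lemma sum_sum_graphMetricInv_mul_hessian_bhat (ht : 0 < 2 * n * (t - t₀)) :
    ∑ i, ∑ j,
      ((if i = j then (1:ℝ) else 0) +
        pd i (bhat n t₀ α x₀ t) x * pd j (bhat n t₀ α x₀ t) x /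
          (1 - ∑ k, (pd k (bhat n t₀ α x₀ t) x) ^ 2)) *
      pd i (fun y => pd j (bhat n t₀ α x₀ t) y) x =
      n / √(2 * n * (t - t₀) + ‖x - x₀‖ ^ 2) := by
  simp only [pd_bhat x₀ x ht, pd_pd_bhat x₀ x ht]
  simpa using sum_sum_graphMetricInv_mul_hessian_cone ht (by positivity)
    (sq_sqrt_add_norm_sub_sq_eq_sum x₀ x ht)

lemma one_sub_sum_sq_pd_bhat (ht : 0 < 2 * n * (t - t₀)) :
    1 - ∑ k, (pd k (bhat n t₀ α x₀ t) x) ^ 2 =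
      2 * n * (t - t₀) / (2 * n * (t - t₀) + ‖x - x₀‖ ^ 2) := by
  simp only [pd_bhat x₀ x ht]
  rw [one_sub_sum_sq_div_eq (by positivity) (sq_sqrt_add_norm_sub_sq_eq_sum x₀ x ht),
    Real.sq_sqrt (by positivity)]

lemma sum_pd_bhat_mul_radial (ht : 0 < 2 * n * (t - t₀)) :
    ∑ i, pd i (bhat n t₀ α x₀ t) x * ((x i - x₀ i) / ‖x - x₀‖) =
      ‖x - x₀‖ / √(2 * n * (t - t₀) + ‖x - x₀‖ ^ 2) := by
  simp only [pd_bhat x₀ x ht, div_mul_div_comm, ← sq, ← Finset.sum_div,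
    ← EuclideanSpace.norm_sub_sq_eq_sum]
  -- at `x = x₀` both sides are `0` through division by zero
  rcases (norm_nonneg (x - x₀)).eq_or_lt with h | h
  · simp [← h]
  · field_simp

end Barrier

theorem stmt_10_general (n : ℕ) (hn : 1 ≤ n) (μ α t₀ : ℝ) (hμ : μ ∈ Set.Ioo (0:ℝ) 1)
    (ht₀ : t₀ < -1) (x₀ : EuclideanSpace ℝ (Fin n)) :
    -- (a)
    (∀ (t : ℝ) (x : EuclideanSpace ℝ (Fin n)), 0 < t → t < -t₀ →
      ‖x - x₀‖ < Real.sqrt ((2 - μ) / μ * (4 * n * (-t₀))) →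
      deriv (fun s => bhat n t₀ α x₀ s x) t -
        ∑ i, ∑ j,
          ((if i = j then (1:ℝ) else 0) +
            pd i (bhat n t₀ α x₀ t) x * pd j (bhat n t₀ α x₀ t) x /
              (1 - ∑ k, (pd k (bhat n t₀ α x₀ t) x) ^ 2)) *
          pd i (fun y => pd j (bhat n t₀ α x₀ t) y) x = α) ∧
    -- (b)
    (∀ (t : ℝ) (x : EuclideanSpace ℝ (Fin n)), 0 ≤ t → t ≤ -t₀ →
      ‖x - x₀‖ ≤ Real.sqrt ((2 - μ) / μ * (4 * n * (-t₀))) →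
      μ / 4 ≤ 1 - ∑ k, (pd k (bhat n t₀ α x₀ t) x) ^ 2) ∧
    -- (c)
    (∀ (t : ℝ) (x : EuclideanSpace ℝ (Fin n)), 0 ≤ t → t ≤ -t₀ →
      ‖x - x₀‖ = Real.sqrt ((2 - μ) / μ * (4 * n * (-t₀))) →
      Real.sqrt (1 - μ / 2) ≤
        ∑ i, pd i (bhat n t₀ α x₀ t) x * ((x i - x₀ i) / ‖x - x₀‖)) := by
  obtain ⟨hμ0, hμ1⟩ := hμ
  have hn' : (1 : ℝ) ≤ n := by exact_mod_cast hn
  have hS : ∀ t : ℝ, 0 ≤ t → 0 < 2 * n * (t - t₀) := fun t ht => by nlinarith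
  have hρ : 0 ≤ (2 - μ) / μ * (4 * n * (-t₀)) :=
    mul_nonneg (div_nonneg (by linarith) hμ0.le) (by nlinarith)
  refine ⟨fun t x ht _ _ => ?_, fun t x ht ht' hx => ?_, fun t x ht ht' hx => ?_⟩
  · have hQ : 0 < 2 * n * (t - t₀) + ‖x - x₀‖ ^ 2 := by have := hS t ht.le; positivity
    rw [(hasDerivAt_bhat_time x₀ x hQ).deriv,
      sum_sum_graphMetricInv_mul_hessian_bhat x₀ x (hS t ht.le)]
    ring
  · rw [one_sub_sum_sq_pd_bhat x₀ x (hS t ht)]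
    refine div_four_le_div_add (T := 4 * n * (-t₀)) hμ0 (by linarith) (hS t ht) (by nlinarith)
      (by positivity) ?_
    rw [← Real.sq_sqrt hρ]
    exact pow_le_pow_left₀ (norm_nonneg _) hx 2
  · rw [sum_pd_bhat_mul_radial x₀ x (hS t ht)]
    exact sqrt_one_sub_half_le (T := 4 * n * (-t₀)) hμ0 (by linarith) (hS t ht) (by nlinarith)
      (norm_nonneg _) (by rw [hx, Real.sq_sqrt hρ])

theorem stmt_10 (n : ℕ) (hn : 1 ≤ n) (μ α t₀ : ℝ) (hμ : μ ∈ Set.Ioo (0:ℝ) 1)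
    (hα : 0 ≤ α) (ht₀ : t₀ < -1) (x₀ : EuclideanSpace ℝ (Fin n)) :
    -- (a)
    (∀ (t : ℝ) (x : EuclideanSpace ℝ (Fin n)), 0 < t → t < -t₀ →
      ‖x - x₀‖ < Real.sqrt ((2 - μ) / μ * (4 * n * (-t₀))) →
      deriv (fun s => bhat n t₀ α x₀ s x) t -
        ∑ i, ∑ j,
          ((if i = j then (1:ℝ) else 0) +
            pd i (bhat n t₀ α x₀ t) x * pd j (bhat n t₀ α x₀ t) x /
              (1 - ∑ k, (pd k (bhat n t₀ α x₀ t) x) ^ 2)) *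
          pd i (fun y => pd j (bhat n t₀ α x₀ t) y) x = α) ∧
    -- (b)
    (∀ (t : ℝ) (x : EuclideanSpace ℝ (Fin n)), 0 ≤ t → t ≤ -t₀ →
      ‖x - x₀‖ ≤ Real.sqrt ((2 - μ) / μ * (4 * n * (-t₀))) →
      μ / 4 ≤ 1 - ∑ k, (pd k (bhat n t₀ α x₀ t) x) ^ 2) ∧
    -- (c)
    (∀ (t : ℝ) (x : EuclideanSpace ℝ (Fin n)), 0 ≤ t → t ≤ -t₀ →
      ‖x - x₀‖ = Real.sqrt ((2 - μ) / μ * (4 * n * (-t₀))) →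
      Real.sqrt (1 - μ / 2) ≤
        ∑ i, pd i (bhat n t₀ α x₀ t) x * ((x i - x₀ i) / ‖x - x₀‖)) :=
  stmt_10_general n hn μ α t₀ hμ ht₀ x₀
end
end

section
/- Let T ∈ (0,∞] and ε ∈ (0,1). Let u : ℝ×[0,T) → ℝ be continuous and bounded, smooth on ℝ×(0,T), with |∂_x u(x,t)| ≤ 1−ε for all (x,t) ∈ ℝ×(0,T), satisfying ∂_t u = ∂²_x u/(1 − (∂_x u)²) on ℝ×(0,T), and suppose the initial datum u₀ := u(·,0) is Lipschitz with constant at most 1−ε and belongs to L²(ℝ). Then u(·,t) ∈ L²(ℝ) and ‖u(·,t)‖_{L²(ℝ)} ≤ ‖u₀‖_{L²(ℝ)} for all t ∈ (0,T). -/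
noncomputable section
open Real MeasureTheory ENNReal

/-- `u : ℝ × [0,T) → ℝ` (written `u t x`) is a bounded, uniformly spacelike
(`|∂ₓu| ≤ 1−ε`) solution of the one-dimensional graphical mean curvature flow
`∂ₜu = ∂ₓ²u/(1 − (∂ₓu)²)` in Minkowski space, continuous on ℝ × [0,T), smooth on
ℝ × (0,T), whose initial datum `u(·,0)` is Lipschitz with constant at most `1−ε`. -/
def Is1DMCF (ε : ℝ) (T : ℝ≥0∞) (u : ℝ → ℝ → ℝ) : Prop :=
  ContinuousOn (fun p : ℝ × ℝ => u p.1 p.2)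
    ({t : ℝ | 0 ≤ t ∧ ENNReal.ofReal t < T} ×ˢ Set.univ) ∧
  (∃ M : ℝ, ∀ t x : ℝ, 0 ≤ t → ENNReal.ofReal t < T → |u t x| ≤ M) ∧
  ContDiffOn ℝ (⊤ : ℕ∞) (fun p : ℝ × ℝ => u p.1 p.2)
    ({t : ℝ | 0 < t ∧ ENNReal.ofReal t < T} ×ˢ Set.univ) ∧
  (∀ t x : ℝ, 0 < t → ENNReal.ofReal t < T → |deriv (u t) x| ≤ 1 - ε) ∧
  (∀ t x : ℝ, 0 < t → ENNReal.ofReal t < T →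
    HasDerivAt (fun s => u s x) (deriv (deriv (u t)) x / (1 - deriv (u t) x ^ 2)) t) ∧
  (∀ x y : ℝ, |u 0 x - u 0 y| ≤ (1 - ε) * |x - y|)


section MCFhelpers
open Set Filter Topology

namespace MCF

def atanh (y : ℝ) : ℝ := (Real.log (1 + y) - Real.log (1 - y)) / 2

lemma hasDerivAt_atanh {y : ℝ} (h : |y| < 1) : HasDerivAt atanh (1 / (1 - y^2)) y := by
  have h1 : -1 < y := by cases abs_lt.mp h; linarith
  have h2 : y < 1 := by cases abs_lt.mp h; linarith
  have d1 : HasDerivAt (fun z : ℝ => Real.log (1 + z)) (1/(1+y)) y := by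
    have := ((hasDerivAt_id y).const_add 1).log (by simp only [id_eq]; intro hc; linarith)
    simpa using this
  have d2 : HasDerivAt (fun z : ℝ => Real.log (1 - z)) (-(1/(1-y))) y := by
    have := ((hasDerivAt_id y).const_sub 1).log (by simp only [id_eq]; intro hc; linarith)
    simpa [neg_div] using this
  have := (d1.sub d2).div_const 2
  refine this.congr_deriv ?_
  have e1 : (1:ℝ)+y ≠ 0 := by linarith
  have e2 : (1:ℝ)-y ≠ 0 := by linarith
  have e3 : (1:ℝ)-y^2 ≠ 0 := by nlinarith
  field_simp
  ring

lemma atanh_neg (y : ℝ) : atanh (-y) = - atanh y := by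
  unfold atanh; rw [show (1:ℝ) + -y = 1 - y by ring, show (1:ℝ) - -y = 1 + y by ring]; ring

lemma atanh_strictMonoOn : StrictMonoOn atanh (Ioo (-1:ℝ) 1) := by
  apply strictMonoOn_of_deriv_pos (convex_Ioo _ _)
  · intro x hx
    exact (hasDerivAt_atanh (abs_lt.mpr ⟨hx.1, hx.2⟩)).continuousAt.continuousWithinAt
  · intro x hx
    rw [interior_Ioo] at hx
    obtain ⟨hx1, hx2⟩ := hx
    rw [(hasDerivAt_atanh (abs_lt.mpr ⟨hx1, hx2⟩)).deriv]
    have : (0:ℝ) < 1 - x^2 := by nlinarith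
    positivity

lemma atanh_abs_le {c y : ℝ} (hc : c < 1) (hy : |y| ≤ c) : |atanh y| ≤ atanh c := by
  have hc0 : 0 ≤ c := le_trans (abs_nonneg y) hy
  have h1 : -c ≤ y := (abs_le.mp hy).1
  have h2 : y ≤ c := (abs_le.mp hy).2
  have hmem : ∀ z : ℝ, |z| ≤ c → z ∈ Ioo (-1:ℝ) 1 := fun z hz => by
    cases abs_le.mp hz; constructor <;> linarith
  have mono := atanh_strictMonoOn.monotoneOn
  have hle : atanh y ≤ atanh c := mono (hmem y hy) (hmem c (by rw [abs_of_nonneg hc0])) h2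
  have hge : atanh (-c) ≤ atanh y := mono (hmem (-c) (by rw [abs_neg, abs_of_nonneg hc0])) (hmem y hy) h1
  rw [atanh_neg] at hge
  exact abs_le.mpr ⟨by linarith, hle⟩

lemma mul_atanh_nonneg {y : ℝ} (h : |y| < 1) : 0 ≤ y * atanh y := by
  rcases le_total 0 y with hy | hy
  · have : atanh 0 ≤ atanh y := atanh_strictMonoOn.monotoneOn (by norm_num)
      ⟨by cases abs_lt.mp h; linarith, by cases abs_lt.mp h; linarith⟩ hy
    have h0 : atanh 0 = 0 := by unfold atanh; norm_num
    exact mul_nonneg hy (by linarith)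
  · have : atanh y ≤ atanh 0 := atanh_strictMonoOn.monotoneOn
      ⟨by cases abs_lt.mp h; linarith, by cases abs_lt.mp h; linarith⟩ (by norm_num) hy
    have h0 : atanh 0 = 0 := by unfold atanh; norm_num
    have := mul_nonneg (neg_nonneg.mpr hy) (neg_nonneg.mpr (by linarith : atanh y ≤ 0)); simpa using this


lemma deriv_contDiff_top {f : ℝ → ℝ} (hf : ContDiff ℝ (↑(⊤:ℕ∞)) f) :
    ContDiff ℝ (↑(⊤:ℕ∞)) (deriv f) :=
  (contDiff_infty_iff_deriv.mp hf).2

/-- Second derivative test: at an interior local max of a C^∞ function, f'' ≤ 0. -/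
lemma second_deriv_test {f : ℝ → ℝ} (hf : ContDiff ℝ (↑(⊤:ℕ∞)) f) {x : ℝ}
    (h : IsLocalMax f x) : deriv (deriv f) x ≤ 0 := by
  by_contra hpos
  push_neg at hpos
  have hd1 : deriv f x = 0 := h.deriv_eq_zero
  have hc : Continuous (deriv (deriv f)) := (deriv_contDiff_top (deriv_contDiff_top hf)).continuous
  have hev : ∀ᶠ y in nhds x, 0 < deriv (deriv f) y ∧ f y ≤ f x :=
    ((continuousAt_const (x := x) (y := (0:ℝ))).eventually_lt hc.continuousAt hpos).and h
  obtain ⟨θ, hθ, hball⟩ := Metric.eventually_nhds_iff_ball.mp hev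
  -- deriv f is strictly monotone on ball x θ
  have hmono : StrictMonoOn (deriv f) (Metric.ball x θ) := by
    apply strictMonoOn_of_deriv_pos (convex_ball x θ)
    · exact (deriv_contDiff_top hf).continuous.continuousOn
    · intro y hy
      rw [interior_eq_iff_isOpen.mpr Metric.isOpen_ball] at hy
      exact (hball y hy).1
  -- hence deriv f > 0 on (x, x+θ)
  have hfmono : StrictMonoOn f (Ico x (x + θ/2)) := by
    apply strictMonoOn_of_deriv_pos (convex_Ico _ _)
    · exact hf.continuous.continuousOn
    · intro y hy
      rw [interior_Ico] at hy
      have hy1 : y ∈ Metric.ball x θ := by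
        rw [Metric.mem_ball, Real.dist_eq, abs_of_pos (by linarith [hy.1])]
        linarith [hy.1, hy.2]
      have : deriv f x < deriv f y := hmono (Metric.mem_ball_self hθ) hy1 hy.1
      linarith [hd1 ▸ this]
  have hx2 : x + θ/4 ∈ Metric.ball x θ := by
    rw [Metric.mem_ball, Real.dist_eq, abs_of_pos (by linarith)]; linarith
  have h1 : f x < f (x + θ/4) :=
    hfmono (by constructor <;> [linarith; linarith]) (by constructor <;> linarith) (by linarith)
  have h2 : f (x + θ/4) ≤ f x := (hball _ hx2).2
  linarith

/-- If `h` has a max over `Icc a b` at `t ∈ (a, b]` and a derivative there, the derivative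
is nonnegative. -/
lemma deriv_nonneg_of_isMaxOn {h : ℝ → ℝ} {d a b t : ℝ} (hat : a < t) (htb : t ≤ b)
    (hmax : IsMaxOn h (Icc a b) t) (hd : HasDerivAt h d t) : 0 ≤ d := by
  have hs : HasDerivWithinAt h d (Ico a t) t := hd.hasDerivWithinAt
  have hslope := hasDerivWithinAt_iff_tendsto_slope.mp hs
  have hne : (Ico a t \ {t}).Nonempty → True := fun _ => trivial
  have hmem : t ∈ closure (Ico a t \ {t}) := by
    rw [Set.diff_singleton_eq_self (by simp)]
    rw [closure_Ico (by linarith : a ≠ t)]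
    exact ⟨le_of_lt hat, le_refl t⟩
  have hnb : (nhdsWithin t (Ico a t \ {t})).NeBot := mem_closure_iff_nhdsWithin_neBot.mp hmem
  refine ge_of_tendsto hslope ?_
  filter_upwards [self_mem_nhdsWithin] with y hy
  rcases hy with ⟨⟨hay, hyt⟩, -⟩
  have h1 : h y ≤ h t := hmax ⟨hay, by linarith⟩
  rw [slope_def_field]
  exact div_nonneg_iff.mpr (Or.inr ⟨by linarith, by linarith⟩)


set_option maxHeartbeats 1000000 in
/-- Barrier estimate on a rectangle for solutions of `u_t = u_xx/(1-u_x²)`. -/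
lemma rect_barrier (Λ lam δ M t₁ R0 R1 : ℝ)
    (hΛ : 0 < Λ) (hlam : 0 < lam) (hδ : 0 ≤ δ) (hM : 0 ≤ M)
    (ht₁ : 0 < t₁) (hR : R0 < R1)
    (u : ℝ → ℝ → ℝ)
    (hcont : ContinuousOn (fun p : ℝ × ℝ => u p.1 p.2) (Icc 0 t₁ ×ˢ Icc R0 R1))
    (hsmooth : ∀ t, 0 < t → t ≤ t₁ → ContDiff ℝ (↑(⊤:ℕ∞)) (u t))
    (hbound : ∀ t x, 0 ≤ t → t ≤ t₁ → x ∈ Icc R0 R1 → u t x ≤ M)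
    (hgrad : ∀ t x, 0 < t → t ≤ t₁ → 1 ≤ Λ * (1 - (deriv (u t) x)^2))
    (hpde : ∀ t x, 0 < t → t ≤ t₁ → HasDerivAt (fun s => u s x)
        (deriv (deriv (u t)) x / (1 - deriv (u t) x ^ 2)) t)
    (hinit : ∀ x ∈ Icc R0 R1, u 0 x ≤ δ) :
    ∀ t x, 0 ≤ t → t ≤ t₁ → x ∈ Icc R0 R1 →
      u t x ≤ δ + M * Real.exp (lam^2*Λ*t) *
        (Real.exp (-lam*(x - R0)) + Real.exp (-lam*(R1 - x))) := by
  set μ : ℝ := lam^2*Λ with hμ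
  have hμ0 : 0 ≤ μ := by positivity
  set w : ℝ → ℝ → ℝ := fun t x => δ + M * Real.exp (μ*t) *
      (Real.exp (-lam*(x - R0)) + Real.exp (-lam*(R1 - x))) with hw
  have hwge : ∀ t x, 0 ≤ t → δ ≤ w t x := by
    intro t x ht
    have : 0 ≤ M * Real.exp (μ*t) * (Real.exp (-lam*(x - R0)) + Real.exp (-lam*(R1 - x))) := by
      positivity
    simp only [hw]; linarith
  -- main claim with slack η
  have key : ∀ η : ℝ, 0 < η → ∀ t x, 0 ≤ t → t ≤ t₁ → x ∈ Icc R0 R1 →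
      u t x - w t x - η * t ≤ 0 := by
    intro η hη
    set g : ℝ × ℝ → ℝ := fun p => u p.1 p.2 - w p.1 p.2 - η * p.1 with hg
    set K : Set (ℝ × ℝ) := Icc 0 t₁ ×ˢ Icc R0 R1 with hK
    have hKc : IsCompact K := (isCompact_Icc).prod isCompact_Icc
    have hKne : K.Nonempty := ⟨(0, R0), ⟨⟨le_refl 0, le_of_lt ht₁⟩, ⟨le_refl R0, le_of_lt hR⟩⟩⟩
    have hwcont : Continuous (fun p : ℝ × ℝ => w p.1 p.2 + η * p.1) := by
      apply Continuous.add _ (continuous_const.mul continuous_fst)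
      apply Continuous.add continuous_const
      exact (continuous_const.mul
          (Real.continuous_exp.comp (continuous_const.mul continuous_fst))).mul
        ((Real.continuous_exp.comp ((continuous_const.mul (continuous_snd.sub continuous_const))))
          |>.add (Real.continuous_exp.comp (continuous_const.mul
            (continuous_const.sub continuous_snd))))
    have hgcont : ContinuousOn g K := by
      have h1 : ContinuousOn (fun p : ℝ × ℝ => u p.1 p.2 - (w p.1 p.2 + η * p.1)) K :=
        hcont.sub hwcont.continuousOn
      have h2 : g = fun p : ℝ × ℝ => u p.1 p.2 - (w p.1 p.2 + η * p.1) := by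
        funext p; simp only [hg]; ring
      rw [h2]; exact h1
    obtain ⟨⟨t', x'⟩, hpK, hpmax⟩ := hKc.exists_isMaxOn hKne hgcont
    obtain ⟨htmem, hx'⟩ := hpK
    simp only [Set.mem_Icc] at htmem hx'
    obtain ⟨ht'0, ht'1⟩ := htmem
    -- it suffices to show g (t', x') ≤ 0
    suffices hle : g (t', x') ≤ 0 by
      intro t x ht0 ht1 hx
      have hmem : ((t, x) : ℝ × ℝ) ∈ K := ⟨⟨ht0, ht1⟩, hx⟩
      have := hpmax hmem
      simp only [Set.mem_setOf_eq] at this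
      exact le_trans this hle
    rcases eq_or_lt_of_le ht'0 with h0 | h0
    · -- bottom: t' = 0
      have hi : u 0 x' ≤ δ := hinit x' (by exact ⟨hx'.1, hx'.2⟩)
      have h2 : δ ≤ w 0 x' := hwge 0 x' le_rfl
      have hte : t' = 0 := h0.symm
      subst hte
      show u 0 x' - w 0 x' - η * 0 ≤ 0
      linarith
    · -- t' > 0
      have hup : u t' x' ≤ M := hbound t' x' ht'0 ht'1 ⟨hx'.1, hx'.2⟩
      have hηt : 0 ≤ η * t' := mul_nonneg hη.le ht'0
      have e1 : (1:ℝ) ≤ Real.exp (μ*t') := by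
        rw [Real.one_le_exp_iff]; positivity
      rcases eq_or_lt_of_le hx'.1 with hxl | hxl
      · -- x' = R0
        have e2 : Real.exp (-lam*(x' - R0)) = 1 := by
          rw [← hxl, sub_self, mul_zero, Real.exp_zero]
        have e3 : 0 ≤ Real.exp (-lam*(R1 - x')) := (Real.exp_pos _).le
        have h2 : δ + M ≤ w t' x' := by
          have hstep : M * 1 ≤ M * Real.exp (μ*t') := by nlinarith
          have hstep2 : M * Real.exp (μ*t') * 1 ≤ M * Real.exp (μ*t') *
              (Real.exp (-lam*(x' - R0)) + Real.exp (-lam*(R1 - x'))) := by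
            apply mul_le_mul_of_nonneg_left _ (by positivity)
            rw [e2]; linarith
          simp only [hw]; nlinarith
        show u t' x' - w t' x' - η * t' ≤ 0
        linarith
      rcases eq_or_lt_of_le hx'.2 with hxr | hxr
      · -- x' = R1
        have e2 : Real.exp (-lam*(R1 - x')) = 1 := by
          rw [hxr, sub_self, mul_zero, Real.exp_zero]
        have e3 : 0 ≤ Real.exp (-lam*(x' - R0)) := (Real.exp_pos _).le
        have h2 : δ + M ≤ w t' x' := by
          have hstep : M * 1 ≤ M * Real.exp (μ*t') := by nlinarith
          have hstep2 : M * Real.exp (μ*t') * 1 ≤ M * Real.exp (μ*t') *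
              (Real.exp (-lam*(x' - R0)) + Real.exp (-lam*(R1 - x'))) := by
            apply mul_le_mul_of_nonneg_left _ (by positivity)
            rw [e2]; linarith
          simp only [hw]; nlinarith
        show u t' x' - w t' x' - η * t' ≤ 0
        linarith
      -- interior in x, t' ∈ (0, t₁]: derive contradiction
      exfalso
      set E : ℝ → ℝ := fun x => M * Real.exp (μ*t') *
          (Real.exp (-lam*(x - R0)) + Real.exp (-lam*(R1 - x))) with hE
      have hEsmooth : ContDiff ℝ (↑(⊤:ℕ∞)) E := by
        apply ContDiff.mul contDiff_const
        apply ContDiff.add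
        · exact Real.contDiff_exp.comp (ContDiff.mul contDiff_const
            (contDiff_id.sub contDiff_const))
        · exact Real.contDiff_exp.comp (ContDiff.mul contDiff_const
            (contDiff_const.sub contDiff_id))
      set φ : ℝ → ℝ := fun x => u t' x - E x with hφ
      have husmooth := hsmooth t' h0 ht'1
      have hφsmooth : ContDiff ℝ (↑(⊤:ℕ∞)) φ := husmooth.sub hEsmooth
      have hmaxφ : IsLocalMax φ x' := by
        have hmo : IsMaxOn φ (Icc R0 R1) x' := by
          intro x hx
          have hmem : ((t', x) : ℝ × ℝ) ∈ K := ⟨⟨ht'0, ht'1⟩, hx⟩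
          have := hpmax hmem
          simp only [Set.mem_setOf_eq, hg, hw] at this
          simp only [Set.mem_setOf_eq, hφ, hE]
          linarith
        exact hmo.isLocalMax (Icc_mem_nhds hxl hxr)
      have hsd := second_deriv_test hφsmooth hmaxφ
      have hud : Differentiable ℝ (u t') := husmooth.differentiable (by norm_num)
      have hu2d : Differentiable ℝ (deriv (u t')) :=
        (deriv_contDiff_top husmooth).differentiable (by norm_num)
      have hEd : ∀ x : ℝ, HasDerivAt E (M * Real.exp (μ*t') *
          ((-lam) * Real.exp (-lam*(x - R0)) + lam * Real.exp (-lam*(R1 - x)))) x := by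
        intro x
        have d1 : HasDerivAt (fun x : ℝ => -lam*(x - R0)) (-lam) x := by
          simpa using ((hasDerivAt_id x).sub_const R0).const_mul (-lam)
        have d2 : HasDerivAt (fun x : ℝ => -lam*(R1 - x)) lam x := by
          simpa using ((hasDerivAt_id x).const_sub R1).const_mul (-lam)
        have := ((d1.exp).add (d2.exp)).const_mul (M * Real.exp (μ*t'))
        refine this.congr_deriv ?_
        ring
      have hdφ : deriv φ = fun x => deriv (u t') x - M * Real.exp (μ*t') *
          ((-lam) * Real.exp (-lam*(x - R0)) + lam * Real.exp (-lam*(R1 - x))) := by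
        funext x
        have := ((hud x).hasDerivAt.sub (hEd x)).deriv
        exact this
      have hE2d : HasDerivAt (fun x => M * Real.exp (μ*t') *
          ((-lam) * Real.exp (-lam*(x - R0)) + lam * Real.exp (-lam*(R1 - x))))
          (lam^2 * E x') x' := by
        have d1 : HasDerivAt (fun x : ℝ => -lam*(x - R0)) (-lam) x' := by
          simpa using ((hasDerivAt_id x').sub_const R0).const_mul (-lam)
        have d2 : HasDerivAt (fun x : ℝ => -lam*(R1 - x)) lam x' := by
          simpa using ((hasDerivAt_id x').const_sub R1).const_mul (-lam)
        have := (((d1.exp).const_mul (-lam)).add ((d2.exp).const_mul lam)).const_mul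
          (M * Real.exp (μ*t'))
        refine this.congr_deriv ?_
        simp only [hE]
        ring
      have hsd2 : deriv (deriv φ) x' = deriv (deriv (u t')) x' - lam^2 * E x' := by
        rw [hdφ]
        have := ((hu2d x').hasDerivAt.sub hE2d).deriv
        exact this
      -- time derivative at the max
      have hmaxh : IsMaxOn (fun s => u s x' - (δ + M * Real.exp (μ*s) *
          (Real.exp (-lam*(x' - R0)) + Real.exp (-lam*(R1 - x')))) - η * s) (Icc 0 t₁) t' := by
        intro s hs
        have hmem : ((s, x') : ℝ × ℝ) ∈ K := ⟨hs, ⟨hx'.1, hx'.2⟩⟩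
        have := hpmax hmem
        simp only [Set.mem_setOf_eq, hg, hw] at this
        simp only [Set.mem_setOf_eq]
        linarith
      have hht : HasDerivAt (fun s => u s x' - (δ + M * Real.exp (μ*s) *
          (Real.exp (-lam*(x' - R0)) + Real.exp (-lam*(R1 - x')))) - η * s)
          (deriv (deriv (u t')) x' / (1 - deriv (u t') x' ^ 2)
            - μ * (M * Real.exp (μ*t') * (Real.exp (-lam*(x' - R0)) + Real.exp (-lam*(R1 - x'))))
            - η) t' := by
        have dexp : HasDerivAt (fun s : ℝ => Real.exp (μ*s)) (Real.exp (μ*t') * μ) t' :=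
          HasDerivAt.exp (by simpa using (hasDerivAt_id t').const_mul μ)
        have d2 : HasDerivAt (fun s : ℝ => δ + M * Real.exp (μ*s) *
            (Real.exp (-lam*(x' - R0)) + Real.exp (-lam*(R1 - x'))))
            (μ * (M * Real.exp (μ*t') *
              (Real.exp (-lam*(x' - R0)) + Real.exp (-lam*(R1 - x'))))) t' := by
          have := ((dexp.const_mul M).mul_const
            (Real.exp (-lam*(x' - R0)) + Real.exp (-lam*(R1 - x')))).const_add δ
          refine this.congr_deriv ?_
          ring
        have d3 : HasDerivAt (fun s : ℝ => η * s) η t' := by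
          simpa using (hasDerivAt_id t').const_mul η
        exact ((hpde t' x' h0 ht'1).sub d2).sub d3
      have htderiv := deriv_nonneg_of_isMaxOn h0 ht'1 hmaxh hht
      -- algebra: contradiction
      have hΛD : 1 ≤ Λ * (1 - (deriv (u t') x')^2) := hgrad t' x' h0 ht'1
      set A := deriv (u t') x' with hA
      set B := deriv (deriv (u t')) x' with hB
      set D := 1 - A^2 with hD
      have hD0 : 0 < D := by nlinarith
      set WX := M * Real.exp (μ*t') *
        (Real.exp (-lam*(x' - R0)) + Real.exp (-lam*(R1 - x'))) with hWX
      have hWX0 : 0 ≤ WX := by positivity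
      have hEx : E x' = WX := rfl
      have hBle : B ≤ lam^2 * WX := by
        rw [hsd2, hEx] at hsd
        linarith
      have hBge : μ * WX + η ≤ B / D := by linarith
      have hB0 : 0 < B := by
        by_contra hb
        push_neg at hb
        have hd : B / D ≤ 0 := div_nonpos_of_nonpos_of_nonneg hb hD0.le
        have := mul_nonneg hμ0 hWX0
        linarith
      have hBD : B / D ≤ Λ * B := by
        rw [div_le_iff₀ hD0]
        have := mul_le_mul_of_nonneg_left hΛD hB0.le
        nlinarith
      have h2' : Λ * B ≤ Λ * (lam^2 * WX) := mul_le_mul_of_nonneg_left hBle hΛ.le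
      have h3' : Λ * (lam^2 * WX) = μ * WX := by rw [hμ]; ring
      linarith
  -- now let η → 0
  intro t x ht0 ht1 hx
  have hkey2 : ∀ η : ℝ, 0 < η → u t x ≤ δ + M * Real.exp (μ*t) *
      (Real.exp (-lam*(x - R0)) + Real.exp (-lam*(R1 - x))) + η := by
    intro η hη
    have h1 := key (η / (t₁ + 1)) (by positivity) t x ht0 ht1 hx
    have h2 : η / (t₁ + 1) * t ≤ η := by
      rw [div_mul_eq_mul_div, div_le_iff₀ (by linarith)]
      nlinarith
    simp only [hw] at h1
    linarith
  exact le_of_forall_pos_le_add hkey2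


def Sset (T : ℝ≥0∞) : Set (ℝ × ℝ) := {t : ℝ | 0 < t ∧ ENNReal.ofReal t < T} ×ˢ Set.univ

lemma isOpen_Sset (T : ℝ≥0∞) : IsOpen (Sset T) := by
  apply IsOpen.prod _ isOpen_univ
  have h : {t : ℝ | 0 < t ∧ ENNReal.ofReal t < T} = Ioi 0 ∩ ENNReal.ofReal ⁻¹' (Iio T) := rfl
  rw [h]
  exact isOpen_Ioi.inter (isOpen_Iio.preimage ENNReal.continuous_ofReal)

variable {ε : ℝ} {T : ℝ≥0∞} {u : ℝ → ℝ → ℝ}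

lemma mem_Sset {t x : ℝ} (ht : 0 < t) (hT : ENNReal.ofReal t < T) : (t, x) ∈ Sset T :=
  ⟨⟨ht, hT⟩, mem_univ x⟩

lemma smooth_slice (hu : Is1DMCF ε T u) {t : ℝ} (ht : 0 < t) (hT : ENNReal.ofReal t < T) :
    ContDiff ℝ (↑(⊤:ℕ∞)) (u t) := by
  have hcomp : ContDiffOn ℝ (⊤ : ℕ∞) (fun x : ℝ => u t x) univ := by
    have hf : ContDiffOn ℝ (⊤ : ℕ∞) (fun x : ℝ => ((t, x) : ℝ × ℝ)) univ :=
      (contDiff_const.prodMk contDiff_id).contDiffOn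
    exact (hu.2.2.1).comp hf (fun x _ => mem_Sset ht hT)
  exact (contDiffOn_univ.mp hcomp).of_le (by simp)

/-- first space derivative as a function on the plane -/
def Vf (u : ℝ → ℝ → ℝ) : ℝ × ℝ → ℝ :=
  fun p => fderiv ℝ (fun q : ℝ × ℝ => u q.1 q.2) p (0, 1)

def Wf (u : ℝ → ℝ → ℝ) : ℝ × ℝ → ℝ := fun p => fderiv ℝ (Vf u) p (0, 1)

lemma eqV (hu : Is1DMCF ε T u) {t x : ℝ} (ht : 0 < t) (hT : ENNReal.ofReal t < T) :
    deriv (u t) x = Vf u (t, x) := by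
  have hp : ((t, x) : ℝ × ℝ) ∈ Sset T := mem_Sset ht hT
  have hdU : DifferentiableAt ℝ (fun q : ℝ × ℝ => u q.1 q.2) (t, x) :=
    ((hu.2.2.1).contDiffAt ((isOpen_Sset T).mem_nhds hp)).differentiableAt (by simp)
  have hxd : HasDerivAt (fun x : ℝ => ((t, x) : ℝ × ℝ)) ((0:ℝ), (1:ℝ)) x :=
    (hasDerivAt_const x t).prodMk (hasDerivAt_id x)
  exact (hdU.hasFDerivAt.comp_hasDerivAt x hxd).deriv

lemma smoothV (hu : Is1DMCF ε T u) : ContDiffOn ℝ (⊤ : ℕ∞) (Vf u) (Sset T) :=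
  ((hu.2.2.1).fderiv_of_isOpen (isOpen_Sset T) (by simp)).clm_apply contDiffOn_const

lemma contV (hu : Is1DMCF ε T u) : ContinuousOn (Vf u) (Sset T) :=
  (smoothV hu).continuousOn

lemma eqW (hu : Is1DMCF ε T u) {t x : ℝ} (ht : 0 < t) (hT : ENNReal.ofReal t < T) :
    deriv (deriv (u t)) x = Wf u (t, x) := by
  have hp : ((t, x) : ℝ × ℝ) ∈ Sset T := mem_Sset ht hT
  have h1 : deriv (u t) = fun y => Vf u (t, y) := by
    funext y
    exact eqV hu ht hT
  rw [h1]
  have hdV : DifferentiableAt ℝ (Vf u) (t, x) :=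
    ((smoothV hu).contDiffAt ((isOpen_Sset T).mem_nhds hp)).differentiableAt (by simp)
  have hxd : HasDerivAt (fun x : ℝ => ((t, x) : ℝ × ℝ)) ((0:ℝ), (1:ℝ)) x :=
    (hasDerivAt_const x t).prodMk (hasDerivAt_id x)
  exact (hdV.hasFDerivAt.comp_hasDerivAt x hxd).deriv

lemma contW (hu : Is1DMCF ε T u) : ContinuousOn (Wf u) (Sset T) := by
  have h : ContDiffOn ℝ (↑(⊤:ℕ∞)) (fun p => (fderiv ℝ (Vf u) p) (0,1)) (Sset T) :=
    ((smoothV hu).fderiv_of_isOpen (m := ↑(⊤:ℕ∞)) (isOpen_Sset T) (by simp)).clm_apply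
      contDiffOn_const
  exact h.continuousOn

def Qf (u : ℝ → ℝ → ℝ) : ℝ × ℝ → ℝ := fun p => Wf u p / (1 - (Vf u p)^2)

lemma denom_pos (hu : Is1DMCF ε T u) (hε : ε ∈ Set.Ioo (0:ℝ) 1)
    {t x : ℝ} (ht : 0 < t) (hT : ENNReal.ofReal t < T) :
    ε * (2 - ε) ≤ 1 - (deriv (u t) x)^2 := by
  have h := hu.2.2.2.1 t x ht hT
  have h1 : -(1-ε) ≤ deriv (u t) x := (abs_le.mp h).1
  have h2 : deriv (u t) x ≤ 1 - ε := (abs_le.mp h).2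
  nlinarith


lemma initial_decay {f : ℝ → ℝ} {L : ℝ} (hL0 : 0 ≤ L) (hL1 : L ≤ 1)
    (hlip : ∀ x y : ℝ, |f x - f y| ≤ L * |x - y|)
    (hL2 : MeasureTheory.MemLp f 2 volume) :
    ∀ δ : ℝ, 0 < δ → ∃ R : ℝ, 1 ≤ R ∧ ∀ x : ℝ, R ≤ |x| → |f x| ≤ δ := by
  have hcont : Continuous f := by
    apply LipschitzWith.continuous (K := Real.toNNReal L)
    apply LipschitzWith.of_dist_le_mul
    intro x y
    rw [Real.dist_eq, Real.dist_eq, Real.coe_toNNReal L hL0]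
    exact hlip x y
  have main : ∀ δ : ℝ, 0 < δ → ∃ R : ℝ, ∀ x : ℝ, R ≤ |x| → |f x| ≤ δ := by
    by_contra hcon
    push_neg at hcon
    obtain ⟨δ, hδ, hbad⟩ := hcon
    set SS : Set ℝ := {x | δ/2 ≤ |f x|} with hSS
    have hSSmeas : MeasurableSet SS :=
      (isClosed_le continuous_const (continuous_abs.comp hcont)).measurableSet
    -- SS has finite measure
    have hfin : volume SS < ⊤ := by
      have hint : Integrable (fun x => f x ^ 2) volume := hL2.integrable_sq
      have hlt : (∫⁻ x, (‖f x ^ 2‖₊ : ℝ≥0∞)) < ⊤ := hint.2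
      have hsub : SS ⊆ {x | ENNReal.ofReal ((δ/2)^2) ≤ (‖f x ^ 2‖₊ : ℝ≥0∞)} := by
        intro x hx
        simp only [mem_setOf_eq] at hx ⊢
        have h1 : (δ/2)^2 ≤ f x ^ 2 := by
          have h2 := mul_self_le_mul_self (by positivity : (0:ℝ) ≤ δ/2) hx
          nlinarith [sq_abs (f x)]
        rw [← enorm_eq_nnnorm, ← ofReal_norm, Real.norm_eq_abs]
        exact le_trans (ENNReal.ofReal_le_ofReal h1) (ENNReal.ofReal_le_ofReal (le_abs_self _))
      have hmarkov := meas_ge_le_lintegral_div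
        (f := fun x => (‖f x ^ 2‖₊ : ℝ≥0∞)) (μ := volume)
        (by fun_prop)
        (ε := ENNReal.ofReal ((δ/2)^2))
        (by simp; positivity) (by simp)
      calc volume SS ≤ volume {x | ENNReal.ofReal ((δ/2)^2) ≤ (‖f x ^ 2‖₊ : ℝ≥0∞)} :=
            measure_mono hsub
        _ ≤ (∫⁻ x, (‖f x ^ 2‖₊ : ℝ≥0∞)) / ENNReal.ofReal ((δ/2)^2) := hmarkov
        _ < ⊤ := ENNReal.div_lt_top hlt.ne (by simp; positivity)
    -- decreasing sets
    set B : ℕ → Set ℝ := fun n => SS ∩ (Icc (-(n:ℝ)) (n:ℝ))ᶜ with hB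
    have hBmeas : ∀ n, NullMeasurableSet (B n) volume := fun n =>
      (hSSmeas.inter (measurableSet_Icc.compl)).nullMeasurableSet
    have hBanti : Antitone B := by
      intro n m hnm
      apply inter_subset_inter_right
      apply compl_subset_compl.mpr
      apply Icc_subset_Icc (by exact_mod_cast neg_le_neg (Nat.cast_le.mpr hnm))
        (by exact_mod_cast Nat.cast_le.mpr hnm)
    have hBempty : (⋂ n, B n) = ∅ := by
      ext x
      simp only [mem_iInter, mem_empty_iff_false, iff_false, not_forall]
      refine ⟨⌈|x|⌉₊, ?_⟩
      intro hx
      have := hx.2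
      apply this
      have h1 : |x| ≤ (⌈|x|⌉₊ : ℝ) := Nat.le_ceil _
      exact ⟨by cases abs_le.mp h1; linarith [neg_abs_le x, abs_nonneg x]; , by
        linarith [le_abs_self x]⟩
    have htend := tendsto_measure_iInter_atTop hBmeas hBanti ⟨0, (lt_of_le_of_lt (measure_mono inter_subset_left) hfin).ne⟩
    rw [hBempty, measure_empty] at htend
    have hlow : ∀ n : ℕ, ENNReal.ofReal δ ≤ volume (B n) := by
      intro n
      obtain ⟨x₀, hx₀R, hx₀v⟩ := hbad ((n:ℝ) + δ/2 + 1)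
      have hicc : Icc (x₀ - δ/2) (x₀ + δ/2) ⊆ B n := by
        intro y hy
        obtain ⟨hy1, hy2⟩ := hy
        have hxy : |x₀ - y| ≤ δ/2 := by
          rw [abs_le]; constructor <;> linarith
        constructor
        · -- y ∈ SS
          have h1 : |f x₀ - f y| ≤ δ/2 := by
            calc |f x₀ - f y| ≤ L * |x₀ - y| := hlip x₀ y
              _ ≤ 1 * (δ/2) := by
                  apply mul_le_mul hL1 hxy (abs_nonneg _) (by norm_num)
              _ = δ/2 := one_mul _
          have h2 : |f x₀| ≤ |f x₀ - f y| + |f y| := by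
            calc |f x₀| = |(f x₀ - f y) + f y| := by ring_nf
              _ ≤ |f x₀ - f y| + |f y| := abs_add_le _ _
          show δ/2 ≤ |f y|
          linarith
        · -- y ∉ Icc (-n) n
          intro hmem
          obtain ⟨hm1, hm2⟩ := hmem
          have h3 : |y| ≤ (n:ℝ) := abs_le.mpr ⟨hm1, hm2⟩
          have h4 : |x₀| ≤ |x₀ - y| + |y| := by
            calc |x₀| = |(x₀ - y) + y| := by ring_nf
              _ ≤ |x₀ - y| + |y| := abs_add_le _ _
          linarith
      calc ENNReal.ofReal δ = volume (Icc (x₀ - δ/2) (x₀ + δ/2)) := by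
            rw [Real.volume_Icc]; norm_num
        _ ≤ volume (B n) := measure_mono hicc
    have h0 : ENNReal.ofReal δ ≤ 0 := ge_of_tendsto htend (Filter.Eventually.of_forall hlow)
    rw [le_zero_iff, ENNReal.ofReal_eq_zero] at h0
    linarith
  intro δ hδ
  obtain ⟨R, hR⟩ := main δ hδ
  exact ⟨max R 1, le_max_right _ _, fun x hx => hR x (le_trans (le_max_left _ _) hx)⟩


variable {ε : ℝ} {T : ℝ≥0∞} {u : ℝ → ℝ → ℝ}

lemma neg_mcf (hu : Is1DMCF ε T u) : Is1DMCF ε T (fun t x => -(u t x)) := by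
  obtain ⟨hcont, ⟨M, hM⟩, hsm, hgrad, hpde, hlip⟩ := hu
  have hdneg : ∀ t : ℝ, deriv (fun x => -(u t x)) = fun x => -(deriv (u t) x) := by
    intro t; funext x; exact deriv.neg
  refine ⟨hcont.neg, ⟨M, fun t x ht hT => by rw [abs_neg]; exact hM t x ht hT⟩,
    hsm.neg, ?_, ?_, ?_⟩
  · intro t x ht hT
    have := hgrad t x ht hT
    rw [hdneg t]
    rwa [abs_neg]
  · intro t x ht hT
    have h := (hpde t x ht hT).neg
    have e1 : deriv (fun x => -(u t x)) x = -(deriv (u t) x) := by rw [hdneg t]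
    have e2 : deriv (deriv (fun x => -(u t x))) x = -(deriv (deriv (u t)) x) := by
      rw [hdneg t]; exact deriv.neg
    have e3 : deriv (deriv (fun x => -(u t x))) x /
        (1 - deriv (fun x => -(u t x)) x ^ 2) =
        -(deriv (deriv (u t)) x / (1 - deriv (u t) x ^ 2)) := by
      rw [e1, e2, neg_sq, neg_div]
    rw [e3]
    exact h
  · intro x y
    have := hlip x y
    rw [show -(u 0 x) - -(u 0 y) = -(u 0 x - u 0 y) by ring, abs_neg]
    exact this

lemma slice_upper (hu : Is1DMCF ε T u) (hε : ε ∈ Set.Ioo (0:ℝ) 1)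
    {t₁ : ℝ} (ht₁ : 0 < t₁) (hT₁ : ENNReal.ofReal t₁ < T)
    {M : ℝ} (hM : ∀ t x : ℝ, 0 ≤ t → ENNReal.ofReal t < T → |u t x| ≤ M) (hM0 : 0 ≤ M)
    {δ : ℝ} (hδ : 0 < δ) {R0 R1 : ℝ} (hR : R0 < R1)
    (hinit : ∀ x ∈ Icc R0 R1, u 0 x ≤ δ) :
    ∀ τ x, 0 ≤ τ → τ ≤ t₁ → x ∈ Icc R0 R1 →
      u τ x ≤ δ + M * Real.exp ((ε*(2-ε))⁻¹ * t₁) *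
        (Real.exp (-(x-R0)) + Real.exp (-(R1-x))) := by
  have hεd : 0 < ε * (2 - ε) := by nlinarith [hε.1, hε.2]
  set Λ : ℝ := (ε*(2-ε))⁻¹ with hΛdef
  have hΛ : 0 < Λ := by positivity
  have hTle : ∀ τ : ℝ, τ ≤ t₁ → ENNReal.ofReal τ < T := fun τ h =>
    lt_of_le_of_lt (ENNReal.ofReal_le_ofReal h) hT₁
  have key := rect_barrier Λ 1 δ M t₁ R0 R1 hΛ one_pos hδ.le hM0 ht₁ hR u
    (hu.1.mono (by
      intro p hp
      exact ⟨⟨hp.1.1, hTle p.1 hp.1.2⟩, mem_univ _⟩))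
    (fun t ht htle => smooth_slice hu ht (hTle t htle))
    (fun t x ht htle hx => le_trans (le_abs_self _) (hM t x ht (hTle t htle)))
    (fun t x ht htle => by
      have h1 := denom_pos hu hε (x := x) ht (hTle t htle)
      have h2 : (ε*(2-ε))⁻¹ * (ε*(2-ε)) = 1 := inv_mul_cancel₀ hεd.ne'
      have h3 := mul_le_mul_of_nonneg_left h1 (by positivity : (0:ℝ) ≤ (ε*(2-ε))⁻¹)
      rw [hΛdef]
      linarith)
    (fun t x ht htle => hu.2.2.2.2.1 t x ht (hTle t htle))
    hinit
  intro τ x hτ0 hτ1 hx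
  have h := key τ x hτ0 hτ1 hx
  have hmono : Real.exp (1^2*Λ*τ) ≤ Real.exp (Λ*t₁) := by
    apply Real.exp_le_exp.mpr
    rw [one_pow, one_mul]
    exact mul_le_mul_of_nonneg_left hτ1 hΛ.le
  have hE0 : 0 ≤ Real.exp (-(x-R0)) + Real.exp (-(R1-x)) := by positivity
  have hconv : (-1)*(x-R0) = -(x-R0) ∧ (-1)*(R1-x) = -(R1-x) := ⟨by ring, by ring⟩
  rw [show -(1:ℝ)*(x-R0) = -(x-R0) by ring, show -(1:ℝ)*(R1-x) = -(R1-x) by ring] at h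
  calc u τ x ≤ δ + M * Real.exp (1^2*Λ*τ) * (Real.exp (-(x-R0)) + Real.exp (-(R1-x))) := h
    _ ≤ δ + M * Real.exp (Λ*t₁) * (Real.exp (-(x-R0)) + Real.exp (-(R1-x))) := by
        have := mul_le_mul_of_nonneg_right
          (mul_le_mul_of_nonneg_left hmono hM0) hE0
        linarith

lemma solution_decay (hu : Is1DMCF ε T u) (hε : ε ∈ Set.Ioo (0:ℝ) 1) (hT : 0 < T)
    {t₁ : ℝ} (ht₁ : 0 < t₁) (hT₁ : ENNReal.ofReal t₁ < T)
    (hL2 : MeasureTheory.MemLp (u 0) 2 volume) :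
    ∀ δ : ℝ, 0 < δ → ∃ R₀ : ℝ, 1 ≤ R₀ ∧ ∀ A, R₀ ≤ A → ∀ τ, 0 ≤ τ → τ ≤ t₁ →
      |u τ A| ≤ 2*δ ∧ |u τ (-A)| ≤ 2*δ := by
  intro δ hδ
  obtain ⟨M, hM⟩ := hu.2.1
  have hT0 : ENNReal.ofReal 0 < T := by simpa using hT
  have hM0 : 0 ≤ M := le_trans (abs_nonneg _) (hM 0 0 le_rfl hT0)
  have hMneg : ∀ t x : ℝ, 0 ≤ t → ENNReal.ofReal t < T → |(fun t x => -(u t x)) t x| ≤ M := by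
    intro t x ht hTt
    simpa [abs_neg] using hM t x ht hTt
  obtain ⟨R, hR1, hRd⟩ := initial_decay (f := u 0) (L := 1-ε)
    (by linarith [hε.2]) (by linarith [hε.1]) hu.2.2.2.2.2 hL2 δ hδ
  set Λ : ℝ := (ε*(2-ε))⁻¹ with hΛdef
  have hεd : 0 < ε * (2 - ε) := by nlinarith [hε.1, hε.2]
  have hΛ : 0 < Λ := by positivity
  set C : ℝ := 2*M*Real.exp (Λ*t₁) + 1 with hC
  have hC0 : 0 < C := by positivity
  set R₀ : ℝ := R + 1 + max 0 (Real.log (C/δ)) with hR₀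
  have hmax0 : 0 ≤ max 0 (Real.log (C/δ)) := le_max_left _ _
  refine ⟨R₀, by rw [hR₀]; linarith, ?_⟩
  intro A hA τ hτ0 hτ1
  have hAR : R + 1 ≤ A := by
    rw [hR₀] at hA; linarith
  have hexp : Real.exp (-(A-R)) ≤ δ / C := by
    have h1 : Real.log (C/δ) ≤ A - R := by
      have := le_max_right 0 (Real.log (C/δ))
      rw [hR₀] at hA
      linarith
    calc Real.exp (-(A-R)) ≤ Real.exp (-(Real.log (C/δ))) :=
          Real.exp_le_exp.mpr (by linarith)
      _ = (C/δ)⁻¹ := by rw [Real.exp_neg, Real.exp_log (by positivity)]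
      _ = δ/C := by rw [inv_div]
  have hmain : 2*M*Real.exp (Λ*t₁) * Real.exp (-(A-R)) ≤ δ := by
    have h2 : 2*M*Real.exp (Λ*t₁) = C - 1 := by rw [hC]; ring
    have h3 : (C-1) * (δ/C) ≤ C * (δ/C) := by
      apply mul_le_mul_of_nonneg_right (by linarith) (by positivity)
    have h4 : C * (δ/C) = δ := by field_simp
    calc 2*M*Real.exp (Λ*t₁) * Real.exp (-(A-R)) ≤ (C-1) * (δ/C) := by
          rw [h2]
          apply mul_le_mul_of_nonneg_left hexp (by rw [← h2]; positivity)
      _ ≤ δ := by rw [h4] at h3; exact h3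
  have hRlt : R < 2*A - R := by linarith
  have hRlt2 : -(2*A - R) < -R := by linarith
  -- right side
  have hinitR : ∀ x ∈ Icc R (2*A-R), u 0 x ≤ δ := by
    intro x hx
    refine le_trans (le_abs_self _) (hRd x ?_)
    rw [abs_of_nonneg (by linarith [hx.1] : (0:ℝ) ≤ x)]
    exact hx.1
  have habs : ∀ x : ℝ, R ≤ |x| → -(u 0 x) ≤ δ ∧ u 0 x ≤ δ := by
    intro x hx
    exact ⟨le_trans (neg_le_abs _) (hRd x hx), le_trans (le_abs_self _) (hRd x hx)⟩
  have hxl : ∀ x ∈ Icc (-(2*A-R)) (-R), R ≤ |x| := by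
    intro x hx
    rw [abs_of_nonpos (by linarith [hx.2] : x ≤ 0)]
    linarith [hx.2]
  have hAmem : A ∈ Icc R (2*A-R) := ⟨by linarith, by linarith⟩
  have hAmem' : -A ∈ Icc (-(2*A-R)) (-R) := ⟨by linarith, by linarith⟩
  have hEeq : M * Real.exp (Λ*t₁) * (Real.exp (-(A-R)) + Real.exp (-(A-R)))
      = 2*M*Real.exp (Λ*t₁) * Real.exp (-(A-R)) := by ring
  -- four barrier applications
  have h1 := slice_upper hu hε ht₁ hT₁ hM hM0 hδ hRlt hinitR τ A hτ0 hτ1 hAmem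
  have h2 := slice_upper (neg_mcf hu) hε ht₁ hT₁ hMneg hM0 hδ hRlt
    (fun x hx => (habs x (by rw [abs_of_nonneg (by linarith [hx.1] : (0:ℝ) ≤ x)]; exact hx.1)).1)
    τ A hτ0 hτ1 hAmem
  have h3 := slice_upper hu hε ht₁ hT₁ hM hM0 hδ hRlt2
    (fun x hx => (habs x (hxl x hx)).2) τ (-A) hτ0 hτ1 hAmem'
  have h4 := slice_upper (neg_mcf hu) hε ht₁ hT₁ hMneg hM0 hδ hRlt2
    (fun x hx => (habs x (hxl x hx)).1) τ (-A) hτ0 hτ1 hAmem'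
  rw [show 2*A - R - A = A - R from by ring] at h1 h2
  rw [show -A - -(2*A-R) = A - R from by ring, show -R - -A = A - R from by ring] at h3 h4
  constructor
  · apply abs_le.mpr
    constructor
    · simp only [hΛdef] at hEeq h2 ⊢
      linarith
    · simp only [hΛdef] at hEeq h1 ⊢
      linarith
  · apply abs_le.mpr
    constructor
    · simp only [hΛdef] at hEeq h4 ⊢
      linarith
    · simp only [hΛdef] at hEeq h3 ⊢
      linarith

lemma eqQ (hu : Is1DMCF ε T u) {t x : ℝ} (ht : 0 < t) (hT : ENNReal.ofReal t < T) :
    deriv (deriv (u t)) x / (1 - deriv (u t) x ^ 2) = Qf u (t, x) := by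
  unfold Qf
  rw [eqV hu ht hT, eqW hu ht hT]

lemma exists_t₂ {t₁ : ℝ} (ht₁ : 0 < t₁) (hT₁ : ENNReal.ofReal t₁ < T) :
    ∃ t₂ : ℝ, t₁ < t₂ ∧ ENNReal.ofReal t₂ < T := by
  rcases eq_or_ne T ⊤ with h | h
  · exact ⟨t₁ + 1, by linarith, h ▸ ENNReal.ofReal_lt_top⟩
  · have h1 : t₁ < T.toReal := by
      rw [← ENNReal.ofReal_lt_iff_lt_toReal ht₁.le h]
      exact hT₁
    refine ⟨(t₁ + T.toReal)/2, by linarith, ?_⟩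
    rw [ENNReal.ofReal_lt_iff_lt_toReal (by linarith) h]
    linarith

lemma energy_est (hu : Is1DMCF ε T u) (hε : ε ∈ Set.Ioo (0:ℝ) 1) (hT : 0 < T)
    (hL2 : MeasureTheory.MemLp (u 0) 2 volume)
    {t₁ : ℝ} (ht₁ : 0 < t₁) (hT₁ : ENNReal.ofReal t₁ < T) :
    ∀ ρ : ℝ, 0 < ρ → ∃ R₀ : ℝ, 1 ≤ R₀ ∧ ∀ A, R₀ ≤ A →
      ∫ x in (-A)..A, (u t₁ x)^2 ≤ (∫ x, (u 0 x)^2) + ρ := by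
  intro ρ hρ
  obtain ⟨t₂, ht₂, hT₂⟩ := exists_t₂ ht₁ hT₁
  obtain ⟨M, hM⟩ := hu.2.1
  have hT0 : ENNReal.ofReal 0 < T := by simpa using hT
  have hM0 : 0 ≤ M := le_trans (abs_nonneg _) (hM 0 0 le_rfl hT0)
  have hTle : ∀ τ : ℝ, τ ≤ t₂ → ENNReal.ofReal τ < T := fun τ h =>
    lt_of_le_of_lt (ENNReal.ofReal_le_ofReal h) hT₂
  set catanh : ℝ := atanh (1-ε) with hcatdef
  have hcat0 : 0 ≤ catanh := by
    have := mul_atanh_nonneg (y := 1-ε) (by rw [abs_of_pos (by linarith [hε.2])]; linarith [hε.1])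
    rcases mul_nonneg_iff.mp this with ⟨h1, h2⟩ | ⟨h1, h2⟩
    · exact h2
    · linarith [hε.2]
  -- continuity of the integrand of the derivative
  set Ψ : ℝ × ℝ → ℝ := fun p => 2 * u p.1 p.2 * Qf u p with hΨdef
  have hεd : 0 < ε * (2 - ε) := by nlinarith [hε.1, hε.2]
  have hUcont : ContinuousOn (fun p : ℝ × ℝ => u p.1 p.2) (Sset T) := by
    apply hu.1.mono
    intro p hp
    exact ⟨⟨hp.1.1.le, hp.1.2⟩, mem_univ _⟩
  have hdenom : ∀ p ∈ Sset T, 1 - (Vf u p)^2 ≠ 0 := by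
    intro p hp
    have h1 := denom_pos hu hε (x := p.2) hp.1.1 hp.1.2
    rw [eqV hu hp.1.1 hp.1.2] at h1
    have : (p.1, p.2) = p := rfl
    rw [this] at h1
    intro hcontra
    rw [hcontra] at h1
    linarith
  have hΨcont : ContinuousOn Ψ (Sset T) := by
    apply ContinuousOn.mul (continuousOn_const.mul hUcont)
    exact (contW hu).div (continuousOn_const.sub ((contV hu).pow 2)) hdenom
  -- pointwise time derivative of the squared solution
  have hF't : ∀ τ x : ℝ, 0 < τ → ENNReal.ofReal τ < T →
      HasDerivAt (fun s => (u s x)^2) (Ψ (τ, x)) τ := by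
    intro τ x hτ hTτ
    have h := (hu.2.2.2.2.1 τ x hτ hTτ).pow 2
    have he : Ψ (τ, x) = 2 * u τ x ^ 1 *
        (deriv (deriv (u τ)) x / (1 - deriv (u τ) x ^ 2)) := by
      rw [hΨdef]
      simp only [pow_one]
      rw [eqQ hu hτ hTτ]
    rw [he]
    exact h.congr_deriv (by norm_num)
  -- differentiation under the integral sign
  have E1 : ∀ A : ℝ, 0 < A → ∀ τ₀ : ℝ, 0 < τ₀ → τ₀ < t₂ →
      HasDerivAt (fun τ => ∫ x in (-A)..A, (u τ x)^2)
        (∫ x in (-A)..A, Ψ (τ₀, x)) τ₀ := by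
    intro A hA τ₀ hτ₀ hτ₀2
    set r : ℝ := min (τ₀/2) ((t₂ - τ₀)/2) with hrdef
    have hr : 0 < r := lt_min (by linarith) (by linarith)
    have hball : ∀ τ ∈ Metric.ball τ₀ r, 0 < τ ∧ τ < t₂ := by
      intro τ hτ
      rw [Metric.mem_ball, Real.dist_eq, abs_lt] at hτ
      have h1 := min_le_left (τ₀/2) ((t₂ - τ₀)/2)
      have h2 := min_le_right (τ₀/2) ((t₂ - τ₀)/2)
      constructor <;> [linarith [hτ.1]; linarith [hτ.2]]
    have hKsub : (Icc (τ₀ - r) (τ₀ + r) ×ˢ Icc (-A) A : Set (ℝ×ℝ)) ⊆ Sset T := by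
      rintro ⟨τ, x⟩ ⟨hτ, -⟩
      have h1 := min_le_left (τ₀/2) ((t₂ - τ₀)/2)
      have h2 := min_le_right (τ₀/2) ((t₂ - τ₀)/2)
      refine ⟨⟨by simp only [mem_Icc] at hτ; linarith [hτ.1], ?_⟩, mem_univ _⟩
      apply hTle
      simp only [mem_Icc] at hτ
      linarith [hτ.2]
    obtain ⟨Cb, hCb⟩ := (isCompact_Icc.prod isCompact_Icc).exists_bound_of_continuousOn
      (hΨcont.mono hKsub)
    have hmeas : ∀ τ : ℝ, 0 < τ → τ < t₂ →
        AEStronglyMeasurable (fun x => (u τ x)^2) (volume.restrict (Set.uIoc (-A) A)) :=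
      fun τ h1 h2 =>
        (((smooth_slice hu h1 (hTle τ h2.le)).continuous.pow 2)).aestronglyMeasurable
    have key := intervalIntegral.hasDerivAt_integral_of_dominated_loc_of_deriv_le
      (F := fun τ x => (u τ x)^2) (F' := fun τ x => Ψ (τ, x)) (x₀ := τ₀)
      (a := -A) (b := A) (μ := volume) (s := Metric.ball τ₀ r) (bound := fun _ => Cb) (Metric.ball_mem_nhds τ₀ hr)
      ?_ ?_ ?_ ?_ ?_ ?_
    · exact key.2
    · filter_upwards [Metric.ball_mem_nhds τ₀ hr] with τ hτ
      exact hmeas τ (hball τ hτ).1 (hball τ hτ).2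
    · exact ((smooth_slice hu hτ₀ (hTle τ₀ hτ₀2.le)).continuous.pow 2).intervalIntegrable _ _
    · have hc : ContinuousOn (fun x => Ψ (τ₀, x)) (Set.uIoc (-A) A) := by
        apply hΨcont.comp (Continuous.continuousOn (continuous_const.prodMk continuous_id))
        intro x _
        exact ⟨⟨hτ₀, hTle τ₀ hτ₀2.le⟩, mem_univ _⟩
      exact hc.aestronglyMeasurable measurableSet_uIoc
    · apply Filter.Eventually.of_forall
      intro x hx τ hτ
      apply hCb
      constructor
      · rw [Metric.mem_ball, Real.dist_eq, abs_lt] at hτ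
        exact ⟨by linarith [hτ.1], by linarith [hτ.2]⟩
      · rw [uIoc_of_le (by linarith : -A ≤ A)] at hx
        exact ⟨hx.1.le, hx.2⟩
    · exact intervalIntegrable_const
    · apply Filter.Eventually.of_forall
      intro x hx τ hτ
      exact hF't τ x (hball τ hτ).1 (hTle τ (hball τ hτ).2.le)
  -- integration by parts estimate
  have E2 : ∀ A : ℝ, 0 < A → ∀ τ : ℝ, 0 < τ → τ ≤ t₁ →
      (∫ x in (-A)..A, Ψ (τ, x)) ≤ 2*catanh*(|u τ A| + |u τ (-A)|) := by
    intro A hA τ hτ hτ1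
    have hTτ : ENNReal.ofReal τ < T := hTle τ (by linarith)
    have husm := smooth_slice hu hτ hTτ
    have hgr : ∀ x : ℝ, |deriv (u τ) x| ≤ 1 - ε := fun x => hu.2.2.2.1 τ x hτ hTτ
    have hgr1 : ∀ x : ℝ, |deriv (u τ) x| < 1 := fun x =>
      lt_of_le_of_lt (hgr x) (by linarith [hε.1])
    have hdpos : ∀ x : ℝ, 0 < 1 - deriv (u τ) x ^2 := by
      intro x
      have h := abs_lt.mp (hgr1 x)
      nlinarith [h.1, h.2]
    have hu2d : Differentiable ℝ (deriv (u τ)) :=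
      (deriv_contDiff_top husm).differentiable (by norm_num)
    have hu3c : Continuous (deriv (deriv (u τ))) :=
      (deriv_contDiff_top (deriv_contDiff_top husm)).continuous
    have hAt : ∀ x : ℝ, HasDerivAt (fun y => atanh (deriv (u τ) y))
        (deriv (deriv (u τ)) x / (1 - deriv (u τ) x ^2)) x := by
      intro x
      have h1 := (hasDerivAt_atanh (hgr1 x)).comp x (hu2d x).hasDerivAt
      refine h1.congr_deriv ?_
      field_simp
    have hibp := intervalIntegral.integral_mul_deriv_eq_deriv_mul
      (u := u τ) (v := fun x => atanh (deriv (u τ) x))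
      (u' := deriv (u τ)) (v' := fun x => deriv (deriv (u τ)) x / (1 - deriv (u τ) x ^2))
      (a := -A) (b := A)
      (fun x _ => (husm.differentiable (by norm_num) x).hasDerivAt)
      (fun x _ => hAt x)
      ((deriv_contDiff_top husm).continuous.intervalIntegrable _ _)
      ((hu3c.div (continuous_const.sub (hu2d.continuous.pow 2))
        (fun x => (hdpos x).ne')).intervalIntegrable _ _)
    have hcongr : (∫ x in (-A)..A, Ψ (τ, x)) =
        2 * ∫ x in (-A)..A, u τ x * (deriv (deriv (u τ)) x / (1 - deriv (u τ) x ^2)) := by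
      rw [← intervalIntegral.integral_const_mul]
      apply intervalIntegral.integral_congr
      intro x _
      simp only [hΨdef]
      rw [← eqQ hu hτ hTτ]
      ring
    have hnn : 0 ≤ ∫ x in (-A)..A, deriv (u τ) x * atanh (deriv (u τ) x) :=
      intervalIntegral.integral_nonneg (by linarith) (fun x _ => mul_atanh_nonneg (hgr1 x))
    have hb1 : u τ A * atanh (deriv (u τ) A) ≤ |u τ A| * catanh := by
      calc u τ A * atanh (deriv (u τ) A) ≤ |u τ A * atanh (deriv (u τ) A)| := le_abs_self _
        _ = |u τ A| * |atanh (deriv (u τ) A)| := abs_mul _ _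
        _ ≤ |u τ A| * catanh := by
            apply mul_le_mul_of_nonneg_left _ (abs_nonneg _)
            exact atanh_abs_le (by linarith [hε.1]) (hgr A)
    have hb2 : -(u τ (-A) * atanh (deriv (u τ) (-A))) ≤ |u τ (-A)| * catanh := by
      calc -(u τ (-A) * atanh (deriv (u τ) (-A)))
          ≤ |u τ (-A) * atanh (deriv (u τ) (-A))| := neg_le_abs _
        _ = |u τ (-A)| * |atanh (deriv (u τ) (-A))| := abs_mul _ _
        _ ≤ |u τ (-A)| * catanh := by
            apply mul_le_mul_of_nonneg_left _ (abs_nonneg _)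
            exact atanh_abs_le (by linarith [hε.1]) (hgr (-A))
    rw [hcongr, hibp]
    linarith
  -- choose δ and R₀ from the decay estimate
  set δ : ℝ := ρ / (16*catanh*t₁ + 1) with hδdef
  have hden : 0 < 16*catanh*t₁ + 1 := by positivity
  have hδ : 0 < δ := div_pos hρ hden
  obtain ⟨R₀, hR₀1, hdecay⟩ := solution_decay hu hε hT ht₁ hT₁ hL2 δ hδ
  refine ⟨R₀, hR₀1, ?_⟩
  intro A hA
  have hA0 : 0 < A := lt_of_lt_of_le (by linarith) hA
  set c : ℝ := 8*catanh*δ with hcdef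
  have hc0 : 0 ≤ c := by positivity
  have hGle : ∀ τ : ℝ, 0 < τ → τ ≤ t₁ → (∫ x in (-A)..A, Ψ (τ, x)) ≤ c := by
    intro τ h1 h2
    have hd := hdecay A hA τ h1.le h2
    calc (∫ x in (-A)..A, Ψ (τ, x)) ≤ 2*catanh*(|u τ A| + |u τ (-A)|) := E2 A hA0 τ h1 h2
      _ ≤ 2*catanh*(2*δ + 2*δ) := by
          apply mul_le_mul_of_nonneg_left _ (by positivity)
          linarith [hd.1, hd.2]
      _ = c := by rw [hcdef]; ring
  have E3 : ∀ s : ℝ, 0 < s → s < t₁ →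
      (∫ x in (-A)..A, (u t₁ x)^2) ≤ (∫ x in (-A)..A, (u s x)^2) + c*(t₁ - s) := by
    intro s hs hst
    set H : ℝ → ℝ := fun τ => (∫ x in (-A)..A, (u τ x)^2) - c*τ with hHdef
    have hH : ∀ τ ∈ Icc s t₁, HasDerivAt H ((∫ x in (-A)..A, Ψ (τ, x)) - c) τ := by
      intro τ hτ
      have hlin : HasDerivAt (fun τ : ℝ => c*τ) c τ := by
        simpa using (hasDerivAt_id τ).const_mul c
      exact (E1 A hA0 τ (lt_of_lt_of_le hs hτ.1) (lt_of_le_of_lt hτ.2 ht₂)).sub hlin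
    have hanti : AntitoneOn H (Icc s t₁) := by
      apply antitoneOn_of_deriv_nonpos (convex_Icc s t₁)
      · intro τ hτ
        exact (hH τ hτ).continuousAt.continuousWithinAt
      · intro τ hτ
        rw [interior_Icc] at hτ
        exact ((hH τ (Ioo_subset_Icc_self hτ)).differentiableAt).differentiableWithinAt
      · intro τ hτ
        rw [interior_Icc] at hτ
        rw [(hH τ (Ioo_subset_Icc_self hτ)).deriv]
        have := hGle τ (lt_trans hs hτ.1) hτ.2.le
        linarith
    have hmono := hanti ⟨le_rfl, hst.le⟩ ⟨hst.le, le_rfl⟩ hst.le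
    simp only [hHdef] at hmono
    linarith
  have E4 : Tendsto (fun s => ∫ x in (-A)..A, (u s x)^2) (nhdsWithin 0 (Ioi 0))
      (𝓝 (∫ x in (-A)..A, (u 0 x)^2)) := by
    apply intervalIntegral.tendsto_integral_filter_of_dominated_convergence
      (bound := fun _ => M^2)
    · filter_upwards [Ioo_mem_nhdsGT_of_mem (show (0:ℝ) ∈ Ico 0 t₂ from ⟨le_rfl, by linarith⟩)]
        with s hs
      exact ((smooth_slice hu hs.1 (hTle s hs.2.le)).continuous.pow 2).aestronglyMeasurable
    · filter_upwards [Ioo_mem_nhdsGT_of_mem (show (0:ℝ) ∈ Ico 0 t₂ from ⟨le_rfl, by linarith⟩)]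
        with s hs
      apply Filter.Eventually.of_forall
      intro x _
      have h1 := hM s x hs.1.le (hTle s hs.2.le)
      rw [Real.norm_eq_abs, abs_of_nonneg (sq_nonneg _), ← sq_abs]
      have := abs_nonneg (u s x)
      nlinarith
    · exact intervalIntegrable_const
    · apply Filter.Eventually.of_forall
      intro x _
      have hcw := hu.1 (0, x) ⟨⟨le_rfl, hT0⟩, mem_univ x⟩
      have hmap : Tendsto (fun s : ℝ => ((s, x) : ℝ×ℝ)) (nhdsWithin 0 (Ioi 0))
          (nhdsWithin ((0:ℝ), x) ({t : ℝ | 0 ≤ t ∧ ENNReal.ofReal t < T} ×ˢ univ)) := by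
        rw [tendsto_nhdsWithin_iff]
        constructor
        · exact ((continuous_id.prodMk continuous_const).tendsto 0).mono_left
            nhdsWithin_le_nhds
        · filter_upwards [Ioo_mem_nhdsGT_of_mem
            (show (0:ℝ) ∈ Ico 0 t₂ from ⟨le_rfl, by linarith⟩)] with s hs
          exact ⟨⟨hs.1.le, hTle s hs.2.le⟩, mem_univ x⟩
      exact (hcw.tendsto.comp hmap).pow 2
  have hlim : (∫ x in (-A)..A, (u t₁ x)^2) ≤ (∫ x in (-A)..A, (u 0 x)^2) + c*t₁ := by
    have hev : ∀ᶠ s in nhdsWithin (0:ℝ) (Ioi 0),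
        (∫ x in (-A)..A, (u t₁ x)^2) - c*t₁ ≤ ∫ x in (-A)..A, (u s x)^2 := by
      filter_upwards [Ioo_mem_nhdsGT_of_mem
        (show (0:ℝ) ∈ Ico 0 t₁ from ⟨le_rfl, ht₁⟩)] with s hs
      have h1 := E3 s hs.1 hs.2
      have h2 : c*(t₁ - s) ≤ c*t₁ := mul_le_mul_of_nonneg_left (by linarith [hs.1]) hc0
      linarith
    have := ge_of_tendsto E4 hev
    linarith
  have hIoc : (∫ x in (-A)..A, (u 0 x)^2) ≤ ∫ x, (u 0 x)^2 := by
    rw [intervalIntegral.integral_of_le (by linarith : -A ≤ A)]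
    apply setIntegral_le_integral hL2.integrable_sq
    apply Filter.Eventually.of_forall
    intro x
    positivity
  have hfinal : c*t₁ ≤ ρ := by
    have heq : c*t₁ = ρ * ((8*catanh*t₁)/(16*catanh*t₁+1)) := by
      rw [hcdef, hδdef]
      field_simp
    rw [heq]
    have hfrac : (8*catanh*t₁)/(16*catanh*t₁+1) ≤ 1 := by
      rw [div_le_one hden]
      have : 0 ≤ 8*catanh*t₁ := by positivity
      linarith
    have := mul_le_mul_of_nonneg_left hfrac hρ.le
    simpa using this
  linarith

end MCF

end MCFhelpers

open Set Filter Topology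

/- STATEMENT 16: L² bound for the one-dimensional graphical mean curvature flow:
if the initial datum is in L²(ℝ), then u(·,t) ∈ L²(ℝ) with
‖u(·,t)‖_{L²} ≤ ‖u₀‖_{L²} for all t ∈ (0,T). -/
theorem stmt_16 (T : ℝ≥0∞) (hT : 0 < T) (ε : ℝ) (hε : ε ∈ Set.Ioo (0:ℝ) 1)
    (u : ℝ → ℝ → ℝ) (hu : Is1DMCF ε T u)
    (hL2 : MemLp (u 0) 2 volume) :
    ∀ t : ℝ, 0 < t → ENNReal.ofReal t < T →
      MemLp (u t) 2 volume ∧ eLpNorm (u t) 2 volume ≤ eLpNorm (u 0) 2 volume := by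
  intro t ht hTt
  have main := MCF.energy_est hu hε hT hL2 ht hTt
  set B : ℝ := ∫ x, (u 0 x)^2 with hB
  have hB0 : 0 ≤ B := integral_nonneg (fun x => sq_nonneg _)
  have hucont : Continuous (u t) := (MCF.smooth_slice hu ht hTt).continuous
  have hum : AEStronglyMeasurable (u t) volume := hucont.aestronglyMeasurable
  have hofr : ∀ a : ℝ, (‖a‖₊ : ℝ≥0∞)^(2:ℝ) = ENNReal.ofReal (a^2) := by
    intro a
    calc (‖a‖₊ : ℝ≥0∞)^(2:ℝ) = (ENNReal.ofReal |a|)^(2:ℝ) := by rw [← enorm_eq_nnnorm, ← ofReal_norm, Real.norm_eq_abs]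
      _ = ENNReal.ofReal (|a|^(2:ℝ)) := ENNReal.ofReal_rpow_of_nonneg (abs_nonneg a) (by norm_num)
      _ = ENNReal.ofReal (a^2) := by
          rw [show ((2:ℝ)) = ((2:ℕ):ℝ) by norm_num, Real.rpow_natCast, sq_abs]
  set g : ℝ → ℝ≥0∞ := fun x => (‖u t x‖₊ : ℝ≥0∞)^(2:ℝ) with hg
  have hgmeas : Measurable g := by
    have h1 : Measurable (u t) := hucont.measurable
    exact (h1.nnnorm.coe_nnreal_ennreal).pow_const (2:ℝ)
  have step : ∀ ρ : ℝ, 0 < ρ → (∫⁻ x, g x) ≤ ENNReal.ofReal (B + ρ) := by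
    intro ρ hρ
    obtain ⟨R₀, hR₀1, hbound⟩ := main ρ hρ
    set sets : ℕ → Set ℝ := fun n => Ioc (-(R₀ + n)) (R₀ + n) with hsets
    have hmono : Monotone (fun n => (sets n).indicator g) := by
      intro m n hmn x
      apply Set.indicator_le_indicator_of_subset
      · apply Ioc_subset_Ioc
        · have : (m:ℝ) ≤ n := Nat.cast_le.mpr hmn
          linarith
        · have : (m:ℝ) ≤ n := Nat.cast_le.mpr hmn
          linarith
      · intro _
        exact zero_le
    have hsup : ∀ x, ⨆ n, (sets n).indicator g x = g x := by
      intro x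
      apply le_antisymm
      · exact iSup_le fun n => Set.indicator_le_self _ _ x
      · obtain ⟨n, hn⟩ := exists_nat_gt |x|
        have hx : x ∈ sets n := by
          have h1 := abs_lt.mp (lt_of_lt_of_le hn (by linarith : (n:ℝ) ≤ R₀ + n))
          exact ⟨h1.1, h1.2.le⟩
        calc g x = (sets n).indicator g x := (Set.indicator_of_mem hx g).symm
          _ ≤ ⨆ n, (sets n).indicator g x := le_iSup (fun n => (sets n).indicator g x) n
    have hlint : (∫⁻ x, g x) = ⨆ n, ∫⁻ x, (sets n).indicator g x := by
      rw [← lintegral_iSup (fun n => hgmeas.indicator measurableSet_Ioc) hmono]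
      apply lintegral_congr
      intro x
      rw [hsup]
    have hterm : ∀ n : ℕ, (∫⁻ x, (sets n).indicator g x) ≤ ENNReal.ofReal (B + ρ) := by
      intro n
      rw [lintegral_indicator measurableSet_Ioc]
      have hint : IntegrableOn (fun x => (u t x)^2) (sets n) volume :=
        ((hucont.pow 2).integrableOn_Icc).mono_set Ioc_subset_Icc_self
      have heq : (∫⁻ x in sets n, g x) = ENNReal.ofReal (∫ x in sets n, (u t x)^2) := by
        rw [ofReal_integral_eq_lintegral_ofReal hint
          (Filter.Eventually.of_forall fun x => sq_nonneg _)]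
        apply lintegral_congr
        intro x
        simp only [hg]
        rw [hofr]
      rw [heq]
      apply ENNReal.ofReal_le_ofReal
      have hABn : -(R₀ + (n:ℝ)) ≤ R₀ + n := by
        have : (0:ℝ) ≤ n := n.cast_nonneg
        linarith
      have hiv : (∫ x in sets n, (u t x)^2) = ∫ x in (-(R₀+(n:ℝ)))..(R₀+n), (u t x)^2 := by
        rw [intervalIntegral.integral_of_le hABn]
      rw [hiv]
      exact hbound (R₀ + n) (by have : (0:ℝ) ≤ n := n.cast_nonneg; linarith)
    rw [hlint]
    exact iSup_le hterm
  have hkey : (∫⁻ x, g x) ≤ ENNReal.ofReal B := by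
    apply ENNReal.le_of_forall_pos_le_add
    intro εn hεn _
    calc (∫⁻ x, g x) ≤ ENNReal.ofReal (B + εn) := step εn (by exact_mod_cast hεn)
      _ ≤ ENNReal.ofReal B + εn := by
          rw [ENNReal.ofReal_add hB0 εn.coe_nonneg]
          simp
  have hI0 : (∫⁻ x, (‖u 0 x‖₊ : ℝ≥0∞)^(2:ℝ)) = ENNReal.ofReal B := by
    rw [ofReal_integral_eq_lintegral_ofReal hL2.integrable_sq
      (Filter.Eventually.of_forall fun x => sq_nonneg _)]
    apply lintegral_congr
    intro x
    rw [hofr]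
  have heLp : ∀ f : ℝ → ℝ, eLpNorm f 2 volume = (∫⁻ x, (‖f x‖₊ : ℝ≥0∞)^(2:ℝ))^(1/(2:ℝ)) := by
    intro f
    rw [eLpNorm_eq_lintegral_rpow_enorm_toReal (by norm_num) (by norm_num)]
    norm_num
    rfl
  constructor
  · refine ⟨hum, ?_⟩
    rw [heLp]
    have hlt : (∫⁻ x, g x) < ⊤ := lt_of_le_of_lt hkey ENNReal.ofReal_lt_top
    exact ENNReal.rpow_lt_top_of_nonneg (by norm_num) hlt.ne
  · rw [heLp, heLp]
    apply ENNReal.rpow_le_rpow _ (by norm_num)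
    rw [hI0]
    exact hkey
end
end

section
/- Let ε ∈ (0,1) and let u : ℝ×[0,∞) → ℝ be continuous and bounded, smooth on ℝ×(0,∞), with |∂_x u(x,t)| ≤ 1−ε for all (x,t) ∈ ℝ×(0,∞), satisfying ∂_t u = ∂²_x u/(1 − (∂_x u)²) on ℝ×(0,∞). Suppose the initial datum u₀ := u(·,0) is Lipschitz with constant at most 1−ε and satisfies u₀(x) → 0 as |x| → ∞. Then sup_{x∈ℝ} |u(x,t)| → 0 as t → ∞. -/
noncomputable section
open Real MeasureTheory ENNReal
open Filter Set Topology

section MCFAux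

lemma second_deriv_nonneg_at_localMin {g g' : ℝ → ℝ} {a m : ℝ}
    (h1 : ∀ x, HasDerivAt g (g' x) x) (h2 : HasDerivAt g' m a)
    (hmin : IsLocalMin g a) : 0 ≤ m := by
  by_contra hm
  push_neg at hm
  have hga : g' a = 0 := by
    have h := hmin.deriv_eq_zero
    rwa [(h1 a).deriv] at h
  have hslope : Tendsto (slope g' a) (𝓝[≠] a) (𝓝 m) :=
    hasDerivAt_iff_tendsto_slope.1 h2
  have hev0 : ∀ᶠ x in 𝓝[≠] a, slope g' a x < 0 :=
    hslope.eventually (eventually_lt_nhds hm)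
  have hev : ∀ᶠ x in 𝓝[>] a, g' x < 0 := by
    have hev1 : ∀ᶠ x in 𝓝[>] a, slope g' a x < 0 :=
      hev0.filter_mono (nhdsWithin_mono a fun x hx => ne_of_gt hx)
    filter_upwards [hev1, self_mem_nhdsWithin] with x hx hxa
    have hxa' : (0:ℝ) < x - a := sub_pos.2 hxa
    have hs : slope g' a x = g' x / (x - a) := by
      rw [slope_def_field, hga, sub_zero]
    rw [hs] at hx
    rcases div_neg_iff.1 hx with ⟨h, h'⟩ | ⟨h, h'⟩
    · linarith
    · exact h
  obtain ⟨b, hab, hsub⟩ := mem_nhdsGT_iff_exists_Ioo_subset.1 hev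
  have hanti : StrictAntiOn g (Set.Ico a b) := by
    refine strictAntiOn_of_deriv_neg (convex_Ico a b)
      (fun x _ => ((h1 x).differentiableAt).continuousAt.continuousWithinAt) ?_
    intro x hx
    rw [interior_Ico] at hx
    rw [(h1 x).deriv]
    exact hsub hx
  have hev2 : ∀ᶠ x in 𝓝[>] a, g a ≤ g x :=
    (hmin.filter_mono nhdsWithin_le_nhds : IsMinFilter g (𝓝[>] a) a)
  have hev3 : ∀ᶠ x in 𝓝[>] a, x ∈ Set.Ioo a b :=
    Ioo_mem_nhdsGT_of_mem ⟨le_refl a, hab⟩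
  obtain ⟨x, hx1, hx2⟩ := (hev2.and hev3).exists
  have := hanti (left_mem_Ico.2 hab) ⟨le_of_lt hx2.1, hx2.2⟩ hx2.1
  linarith

lemma deriv_nonpos_of_isMinOn_left {f : ℝ → ℝ} {m a : ℝ} (ha : 0 < a)
    (hf : HasDerivAt f m a) (h : ∀ t ∈ Set.Ico (0:ℝ) a, f a ≤ f t) : m ≤ 0 := by
  have hslope : Tendsto (slope f a) (𝓝[<] a) (𝓝 m) :=
    (hasDerivAt_iff_tendsto_slope.1 hf).mono_left
      (nhdsWithin_mono a fun x hx => ne_of_lt hx)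
  refine le_of_tendsto hslope ?_
  filter_upwards [Ioo_mem_nhdsLT_of_mem ⟨ha, le_refl a⟩] with x hx
  have h1 : f a ≤ f x := h x ⟨le_of_lt hx.1, hx.2⟩
  have h2 : x - a < 0 := sub_neg.2 hx.2
  rw [slope_def_field]
  exact div_nonpos_iff.2 (Or.inl ⟨by linarith, le_of_lt h2⟩)


/-- The decaying barrier profile. -/
noncomputable def phiB (K t x : ℝ) : ℝ :=
  Real.exp (-(Real.log (t+1) / (2*K)) - x^2/(4*K*(t+1)))

lemma phiB_pos (K t x : ℝ) : 0 < phiB K t x := Real.exp_pos _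

lemma phiB_le (K t x : ℝ) (hK : 0 < K) (ht : 0 ≤ t) :
    phiB K t x ≤ Real.exp (-(Real.log (t+1) / (2*K))) := by
  apply Real.exp_le_exp.2
  have h4 : 0 < 4*K*(t+1) := by nlinarith
  have : 0 ≤ x^2/(4*K*(t+1)) := div_nonneg (sq_nonneg x) h4.le
  linarith

lemma hasDerivAt_phiB_t (K : ℝ) (hK : 1 ≤ K) {t : ℝ} (ht : 0 < t) (x : ℝ) :
    HasDerivAt (fun t => phiB K t x)
      (phiB K t x * (x^2/(4*K*(t+1)^2) - 1/(2*K*(t+1)))) t := by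
  have hK0 : (0:ℝ) < K := lt_of_lt_of_le one_pos hK
  have ht1 : (0:ℝ) < t + 1 := by linarith
  have hne : (4:ℝ)*K*(t+1) ≠ 0 := by positivity
  have h1 : HasDerivAt (fun t : ℝ => Real.log (t+1)) (1/(t+1)) t := by
    have := ((hasDerivAt_id t).add_const 1).log (ne_of_gt ht1)
    simpa using this
  have h2 : HasDerivAt (fun t : ℝ => 4*K*(t+1)) (4*K) t := by
    have := ((hasDerivAt_id t).add_const 1).const_mul (4*K)
    simpa using this
  have h3 : HasDerivAt (fun t : ℝ => x^2/(4*K*(t+1)))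
      ((0 * (4*K*(t+1)) - x^2*(4*K)) / (4*K*(t+1))^2) t :=
    (hasDerivAt_const t (x^2)).div h2 hne
  have h4 : HasDerivAt (fun t : ℝ => -(Real.log (t+1) / (2*K)) - x^2/(4*K*(t+1)))
      (-(1/(t+1)/(2*K)) - (0 * (4*K*(t+1)) - x^2*(4*K)) / (4*K*(t+1))^2) t :=
    ((h1.div_const (2*K)).neg).sub h3
  have h5 := h4.exp
  convert h5 using 1
  · rfl
  rw [show phiB K t x = Real.exp (-(Real.log (t+1) / (2*K)) - x^2/(4*K*(t+1))) from rfl]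
  field_simp
  ring

lemma hasDerivAt_phiB_x (K : ℝ) (hK : 1 ≤ K) {t : ℝ} (ht : 0 ≤ t) (x : ℝ) :
    HasDerivAt (fun x => phiB K t x) (phiB K t x * (-(2*x)/(4*K*(t+1)))) x := by
  have hK0 : (0:ℝ) < K := lt_of_lt_of_le one_pos hK
  have ht1 : (0:ℝ) < t + 1 := by linarith
  have h1 : HasDerivAt (fun x : ℝ => x^2/(4*K*(t+1))) ((2*x^1)/(4*K*(t+1))) x := by
    have := (hasDerivAt_pow 2 x).div_const (4*K*(t+1))
    simpa using this
  have h2 : HasDerivAt (fun x : ℝ => -(Real.log (t+1) / (2*K)) - x^2/(4*K*(t+1)))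
      (0 - (2*x^1)/(4*K*(t+1))) x :=
    (hasDerivAt_const x _).sub h1
  have h3 := h2.exp
  convert h3 using 1
  · rfl
  rw [show phiB K t x = Real.exp (-(Real.log (t+1) / (2*K)) - x^2/(4*K*(t+1))) from rfl]
  ring

lemma hasDerivAt_phiB_xx (K : ℝ) (hK : 1 ≤ K) {t : ℝ} (ht : 0 ≤ t) (x : ℝ) :
    HasDerivAt (fun x => phiB K t x * (-(2*x)/(4*K*(t+1))))
      (phiB K t x * ((2*x/(4*K*(t+1)))^2 - 2/(4*K*(t+1)))) x := by
  have hK0 : (0:ℝ) < K := lt_of_lt_of_le one_pos hK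
  have ht1 : (0:ℝ) < t + 1 := by linarith
  have hne : (4:ℝ)*K*(t+1) ≠ 0 := by positivity
  have hlin : HasDerivAt (fun x : ℝ => -(2*x)/(4*K*(t+1))) (-(2*1)/(4*K*(t+1))) x := by
    exact (((hasDerivAt_id x).const_mul 2).neg).div_const _
  have h := (hasDerivAt_phiB_x K hK ht x).mul hlin
  convert h using 1
  · rfl
  · rfl
  · rfl
  ring

lemma div_le_div_of_nonneg_right' {a b c : ℝ} (h : a ≤ b) (hc : 0 < c) :
    a / c ≤ b / c := by
  rw [div_eq_mul_inv, div_eq_mul_inv]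
  have := inv_nonneg.2 hc.le
  nlinarith

lemma mcf_upper (u : ℝ → ℝ → ℝ) (M C δ K : ℝ) (hK : 1 ≤ K)
    (hcont : ContinuousOn (fun p : ℝ × ℝ => u p.1 p.2)
      ({s : ℝ | 0 ≤ s} ×ˢ (Set.univ : Set ℝ)))
    (hM : ∀ t x : ℝ, 0 ≤ t → |u t x| ≤ M)
    (hsmooth : ContDiffOn ℝ (⊤ : ℕ∞) (fun p : ℝ × ℝ => u p.1 p.2)
      ({s : ℝ | 0 < s} ×ˢ (Set.univ : Set ℝ)))
    (hg2 : ∀ t x : ℝ, 0 < t → 1/K ≤ 1 - (deriv (u t) x)^2 ∧ 1 - (deriv (u t) x)^2 ≤ 1)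
    (hpde : ∀ t x : ℝ, 0 < t →
      HasDerivAt (fun s => u s x) (deriv (deriv (u t)) x / (1 - deriv (u t) x ^ 2)) t)
    (hδ : 0 < δ) (hC : 0 < C)
    (hinit : ∀ x : ℝ, u 0 x ≤ δ + C * Real.exp (-(x^2)/(4*K)))
    {t x : ℝ} (ht : 0 ≤ t) :
    u t x ≤ δ + C * phiB K t x := by
  have hK0 : (0:ℝ) < K := lt_of_lt_of_le one_pos hK
  have hM0 : (0:ℝ) ≤ M := le_trans (abs_nonneg _) (hM 0 0 le_rfl)
  -- Step A: barrier bound with η-correction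
  have stepA : ∀ η : ℝ, 0 < η →
      u t x ≤ δ + C * phiB K t x + η * (x^2 + (2*K+1)*t) := by
    intro η hη
    by_contra hlt
    push_neg at hlt
    obtain ⟨V, hV⟩ : ∃ V : ℝ → ℝ → ℝ,
        V = fun s y => δ + C * phiB K s y + η * (y^2 + (2*K+1)*s) := ⟨_, rfl⟩
    obtain ⟨W, hW⟩ : ∃ W : ℝ × ℝ → ℝ, W = fun p => V p.1 p.2 - u p.1 p.2 := ⟨_, rfl⟩
    obtain ⟨L, hLdef⟩ : ∃ L : ℝ, L = |x| + Real.sqrt (M/η) + 1 := ⟨_, rfl⟩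
    have hsq : Real.sqrt (M/η) ^ 2 = M/η := Real.sq_sqrt (by positivity)
    have hLbig : ∀ y : ℝ, L ≤ |y| → M ≤ η * y^2 := by
      intro y hy
      have h1 : Real.sqrt (M/η) ≤ |y| := by
        have : (0:ℝ) ≤ |x| := abs_nonneg x
        linarith
      have h2 : M/η ≤ y^2 := by
        calc M/η = Real.sqrt (M/η)^2 := hsq.symm
        _ ≤ |y|^2 := by
          apply pow_le_pow_left₀ (Real.sqrt_nonneg _) h1
        _ = y^2 := sq_abs y
      calc M = η * (M/η) := by field_simp
      _ ≤ η * y^2 := by nlinarith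
    have hWnn : ∀ s y : ℝ, 0 ≤ s → L ≤ |y| → 0 ≤ W (s, y) := by
      intro s y hs hy
      have h1 : M ≤ η * y^2 := hLbig y hy
      have h3 : u s y ≤ M := (abs_le.1 (hM s y hs)).2
      have h4 : 0 < C * phiB K s y := mul_pos hC (phiB_pos K s y)
      have h5 : 0 ≤ η * ((2*K+1)*s) := by positivity
      simp only [hW, hV]
      nlinarith
    obtain ⟨D, hD⟩ : ∃ D : Set (ℝ × ℝ), D = Icc (0:ℝ) t ×ˢ Icc (-L) L := ⟨_, rfl⟩
    have hxL : |x| ≤ L := by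
      have := Real.sqrt_nonneg (M/η); linarith
    have hin : (t, x) ∈ D := by
      rw [hD]; exact ⟨⟨ht, le_rfl⟩, abs_le.1 hxL⟩
    have hDsub : D ⊆ {s : ℝ | 0 ≤ s} ×ˢ (Set.univ : Set ℝ) := by
      rw [hD]; rintro ⟨s, y⟩ ⟨hs, _⟩
      exact ⟨hs.1, mem_univ _⟩
    have hVcont : ContinuousOn (fun p : ℝ × ℝ => V p.1 p.2)
        ({s : ℝ | 0 ≤ s} ×ˢ (Set.univ : Set ℝ)) := by
      intro p hp
      have hp1 : (0:ℝ) < p.1 + 1 := by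
        have : (0:ℝ) ≤ p.1 := hp.1
        linarith
      apply ContinuousAt.continuousWithinAt
      have c0 : ContinuousAt (fun p : ℝ × ℝ => p.1 + 1) p :=
        (continuous_fst.add continuous_const).continuousAt
      have c1 : ContinuousAt (fun p : ℝ × ℝ => Real.log (p.1 + 1)) p :=
        ContinuousAt.log c0 (ne_of_gt hp1)
      have c2 : ContinuousAt (fun p : ℝ × ℝ => p.2^2/(4*K*(p.1+1))) p := by
        apply ContinuousAt.div
        · exact (continuous_snd.pow 2).continuousAt
        · exact (continuous_const.mul (continuous_fst.add continuous_const)).continuousAt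
        · positivity
      have c3 : ContinuousAt (fun p : ℝ × ℝ => phiB K p.1 p.2) p := by
        simp only [phiB]
        exact Real.continuous_exp.continuousAt.comp ((c1.div_const (2*K)).neg.sub c2)
      have c4 : ContinuousAt (fun p : ℝ × ℝ => η * (p.2^2 + (2*K+1)*p.1)) p :=
        (continuous_const.mul ((continuous_snd.pow 2).add
          (continuous_const.mul continuous_fst))).continuousAt
      rw [hV]
      exact (continuousAt_const.add (c3.const_mul C)).add c4
    have hWcont : ContinuousOn W D := by
      rw [hW]
      exact ((hVcont.mono hDsub).sub (hcont.mono hDsub))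
    have hDcpt : IsCompact D := by rw [hD]; exact isCompact_Icc.prod isCompact_Icc
    obtain ⟨⟨t₁, x₁⟩, hpD, hmin⟩ := hDcpt.exists_isMinOn ⟨(t, x), hin⟩ hWcont
    have hneg : W (t₁, x₁) < 0 := by
      refine lt_of_le_of_lt (hmin hin) ?_
      simp only [hW, hV]
      linarith
    rw [hD] at hpD
    obtain ⟨⟨ht₁0', ht₁t'⟩, hx₁'⟩ := hpD
    have ht₁0 : (0:ℝ) ≤ t₁ := ht₁0'
    have ht₁t : t₁ ≤ t := ht₁t'
    have hx₁ : x₁ ∈ Icc (-L) L := hx₁'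
    have hx₁int : |x₁| < L := by
      by_contra hc
      push_neg at hc
      exact absurd (hWnn t₁ x₁ ht₁0 hc) (not_le.2 hneg)
    have ht₁pos : 0 < t₁ := by
      rcases lt_or_eq_of_le ht₁0 with h | h
      · exact h
      · exfalso
        have h0 : phiB K 0 x₁ = Real.exp (-(x₁^2)/(4*K)) := by
          simp [phiB, neg_div]
        have hi := hinit x₁
        simp only [hW, hV] at hneg
        rw [show t₁ = 0 from h.symm, h0] at hneg
        nlinarith [sq_nonneg x₁]
    -- slice regularity
    have hcd : ContDiff ℝ (⊤ : ℕ∞) (u t₁) := by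
      have hmap : MapsTo (fun y : ℝ => ((t₁ : ℝ), y)) Set.univ
          ({s : ℝ | 0 < s} ×ˢ (Set.univ : Set ℝ)) := fun y _ => ⟨ht₁pos, mem_univ _⟩
      have h := hsmooth.comp (ContDiff.contDiffOn (contDiff_const.prodMk contDiff_id)) hmap
      rw [contDiffOn_univ] at h
      exact h
    have hcd' : ContDiff ℝ ((⊤:ℕ∞):WithTop ℕ∞) (u t₁) := hcd.of_le (by simp)
    have hd1 : Differentiable ℝ (u t₁) := hcd'.differentiable (by simp)
    have hd2 : Differentiable ℝ (deriv (u t₁)) :=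
      ((contDiff_infty_iff_deriv.1 hcd').2).differentiable (by simp)
    obtain ⟨q, hq⟩ : ∃ q : ℝ, q = deriv (deriv (u t₁)) x₁ := ⟨_, rfl⟩
    obtain ⟨r, hr⟩ : ∃ r : ℝ, r = 1 - deriv (u t₁) x₁ ^ 2 := ⟨_, rfl⟩
    obtain ⟨hr1, hr2⟩ := hg2 t₁ x₁ ht₁pos
    rw [← hr] at hr1 hr2
    have hr0 : 0 < r := lt_of_lt_of_le (by positivity) hr1
    obtain ⟨s, hs⟩ : ∃ s : ℝ, s = t₁ + 1 := ⟨_, rfl⟩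
    have hs1 : (1:ℝ) < s := by rw [hs]; linarith
    have hs0 : (0:ℝ) < s := by linarith
    obtain ⟨P, hP⟩ : ∃ P : ℝ, P = phiB K t₁ x₁ := ⟨_, rfl⟩
    have hP0 : 0 < P := by rw [hP]; exact phiB_pos K t₁ x₁
    -- spatial local min
    have hlocmin : IsLocalMin (fun y => V t₁ y - u t₁ y) x₁ := by
      have hmem : Icc (-L) L ∈ 𝓝 x₁ := by
        apply _root_.Icc_mem_nhds
        · cases' abs_lt.1 hx₁int with h _; linarith
        · exact (abs_lt.1 hx₁int).2
      refine Filter.eventually_of_mem hmem (fun y hy => ?_)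
      have := hmin (by rw [hD]; exact ⟨⟨ht₁0, ht₁t⟩, hy⟩ :
        ((t₁ : ℝ), y) ∈ D)
      simpa only [hW, Set.mem_setOf_eq] using this
    -- spatial derivatives
    obtain ⟨g, hg⟩ : ∃ g : ℝ → ℝ, g = fun y =>
        (C * (phiB K t₁ y * (-(2*y)/(4*K*s))) + η * (2*y)) - deriv (u t₁) y := ⟨_, rfl⟩
    have h1 : ∀ y, HasDerivAt (fun y => V t₁ y - u t₁ y) (g y) y := by
      intro y
      have hb := (hasDerivAt_phiB_x K hK ht₁0 y).const_mul C
      have hp : HasDerivAt (fun y : ℝ => η * (y^2 + (2*K+1)*t₁)) (η * (2*y)) y := by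
        have := ((hasDerivAt_pow 2 y).add_const ((2*K+1)*t₁)).const_mul η
        simpa using this
      have hh := ((hb.const_add δ).add hp).sub (hd1 y).hasDerivAt
      rw [hV, hg, hs]
      convert hh using 1
      rfl
      rfl
      rfl
    have h2 : HasDerivAt g
        (C * (P * ((2*x₁/(4*K*s))^2 - 2/(4*K*s))) + η*2 - q) x₁ := by
      have hb := (hasDerivAt_phiB_xx K hK ht₁0 x₁).const_mul C
      have hp : HasDerivAt (fun y : ℝ => η * (2*y)) (η * 2) x₁ := by
        have := ((hasDerivAt_id x₁).const_mul 2).const_mul η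
        simpa [mul_assoc] using this
      have hh := (hb.add hp).sub (hd2 x₁).hasDerivAt
      rw [hg, hs, hP, hq]
      convert hh using 1
      rfl
      rfl
      rfl
    have hqle : q ≤ C * (P * ((2*x₁/(4*K*s))^2 - 2/(4*K*s))) + η*2 := by
      have := second_deriv_nonneg_at_localMin h1 h2 hlocmin
      linarith
    -- time derivative
    have hft : HasDerivAt (fun τ => V τ x₁ - u τ x₁)
        (C * (P * (x₁^2/(4*K*s^2) - 1/(2*K*s))) + η*(2*K+1) - q/r) t₁ := by
      have hb := (hasDerivAt_phiB_t K hK ht₁pos x₁).const_mul C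
      have hp : HasDerivAt (fun τ : ℝ => η * (x₁^2 + (2*K+1)*τ)) (η * (2*K+1)) t₁ := by
        have := (((hasDerivAt_id t₁).const_mul (2*K+1)).const_add (x₁^2)).const_mul η
        simpa using this
      have hh := ((hb.const_add δ).add hp).sub (hpde t₁ x₁ ht₁pos)
      rw [hV, hP, hs, hq, hr]
      convert hh using 1
      rfl
      rfl
      rfl
    have htime : C * (P * (x₁^2/(4*K*s^2) - 1/(2*K*s))) + η*(2*K+1) - q/r ≤ 0 := by
      apply deriv_nonpos_of_isMinOn_left ht₁pos hft
      intro τ hτ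
      have := hmin (by rw [hD]; exact ⟨⟨hτ.1, le_trans (le_of_lt hτ.2) ht₁t⟩, hx₁⟩ :
        ((τ : ℝ), x₁) ∈ D)
      simpa only [hW, Set.mem_setOf_eq] using this
    -- algebraic contradiction
    obtain ⟨a, ha⟩ : ∃ a : ℝ, a = r⁻¹ := ⟨_, rfl⟩
    have har : a * r = 1 := by rw [ha]; field_simp
    have ha0 : 0 < a := by rw [ha]; exact inv_pos.2 hr0
    have ha1 : 1 ≤ a := by
      have h3 := mul_le_mul_of_nonneg_left hr2 ha0.le
      rw [har, mul_one] at h3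
      exact h3
    have hKr : 1 ≤ K * r := by
      have h3 := mul_le_mul_of_nonneg_left hr1 hK0.le
      rwa [show K * (1/K) = 1 by field_simp] at h3
    have haK : a ≤ K := le_of_mul_le_mul_right (by linarith : a * r ≤ K * r) hr0
    obtain ⟨B1, hB1⟩ : ∃ B1 : ℝ, B1 = x₁^2/(4*K*s^2) - 1/(2*K*s) := ⟨_, rfl⟩
    obtain ⟨B2, hB2⟩ : ∃ B2 : ℝ, B2 = (2*x₁/(4*K*s))^2 - 2/(4*K*s) := ⟨_, rfl⟩
    have hbr : B1 - a*B2 = (x₁^2/(4*K*s^2))*(1 - a/K) + (1/(2*K*s))*(a-1) := by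
      rw [hB1, hB2]
      field_simp
      ring
    have hbr0 : 0 ≤ B1 - a*B2 := by
      rw [hbr]
      have e1 : (0:ℝ) ≤ x₁^2/(4*K*s^2) := by positivity
      have e2 : (0:ℝ) ≤ 1 - a/K := by
        rw [sub_nonneg, div_le_one hK0]; exact haK
      have e3 : (0:ℝ) ≤ 1/(2*K*s) := by positivity
      have e4 : (0:ℝ) ≤ a - 1 := by linarith
      positivity
    have hqdiv : q/r ≤ (C * (P * B2) + η*2) * a := by
      have hqle' : q ≤ C * (P * B2) + η*2 := by rw [hB2]; exact hqle
      have h1' : q/r ≤ (C * (P * B2) + η*2)/r :=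
        div_le_div_of_nonneg_right' hqle' hr0
      have h2' : (C * (P * B2) + η*2)/r = (C * (P * B2) + η*2) * a := by
        rw [ha, div_eq_mul_inv]
      rwa [h2'] at h1'
    have hfinal : 0 < C * (P * B1) + η*(2*K+1) - (C * (P * B2) + η*2) * a := by
      have e1 : 0 ≤ C * P * (B1 - a * B2) := mul_nonneg (by positivity) hbr0
      have e2 : η * a ≤ η * K := mul_le_mul_of_nonneg_left haK hη.le
      have expand : C * (P * B1) + η*(2*K+1) - (C * (P * B2) + η*2) * a
          = C * P * (B1 - a*B2) + 2*(η*K - η*a) + η := by ring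
      rw [expand]
      linarith
    rw [← hB1] at htime
    linarith [hqdiv, htime, hfinal]
  -- conclude
  have hN : (0:ℝ) ≤ x^2 + (2*K+1)*t := by nlinarith
  refine le_of_forall_pos_le_add ?_
  intro ε' hε'
  have hη : 0 < ε'/((x^2 + (2*K+1)*t)+1) := by positivity
  have hA := stepA (ε'/((x^2 + (2*K+1)*t)+1)) hη
  have hle : ε'/((x^2 + (2*K+1)*t)+1) * (x^2 + (2*K+1)*t) ≤ ε' := by
    rw [div_mul_eq_mul_div, div_le_iff₀ (by linarith)]
    nlinarith
  linarith

end MCFAux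

/- STATEMENT 19: Uniform convergence to 0 in the one-dimensional case: if the initial
datum is Lipschitz with constant ≤ 1−ε and tends to 0 at infinity, then
sup_x |u(x,t)| → 0 as t → ∞. -/
theorem stmt_19 (ε : ℝ) (hε : ε ∈ Set.Ioo (0:ℝ) 1)
    (u : ℝ → ℝ → ℝ) (hu : Is1DMCF ε ⊤ u)
    (hdecay : ∀ δ : ℝ, 0 < δ → ∃ Rδ : ℝ, ∀ x : ℝ, Rδ ≤ |x| → |u 0 x| ≤ δ) :
    ∀ δ : ℝ, 0 < δ → ∃ T₀ : ℝ, ∀ t : ℝ, T₀ ≤ t → ∀ x : ℝ, |u t x| ≤ δ := by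
  obtain ⟨hε0, hε1⟩ := hε
  obtain ⟨hcont0, ⟨M, hM0⟩, hsmooth0, hgrad0, hpde0, _⟩ := hu
  have hsetc : {t : ℝ | 0 ≤ t ∧ ENNReal.ofReal t < ⊤} = {s : ℝ | 0 ≤ s} := by
    ext t; simp [ENNReal.ofReal_lt_top]
  have hseto : {t : ℝ | 0 < t ∧ ENNReal.ofReal t < ⊤} = {s : ℝ | 0 < s} := by
    ext t; simp [ENNReal.ofReal_lt_top]
  rw [hsetc] at hcont0
  rw [hseto] at hsmooth0
  have hM : ∀ t x : ℝ, 0 ≤ t → |u t x| ≤ M := fun t x h => hM0 t x h ENNReal.ofReal_lt_top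
  have hgrad : ∀ t x : ℝ, 0 < t → |deriv (u t) x| ≤ 1 - ε :=
    fun t x h => hgrad0 t x h ENNReal.ofReal_lt_top
  have hpde : ∀ t x : ℝ, 0 < t →
      HasDerivAt (fun s => u s x) (deriv (deriv (u t)) x / (1 - deriv (u t) x ^ 2)) t :=
    fun t x h => hpde0 t x h ENNReal.ofReal_lt_top
  -- the ellipticity constant
  obtain ⟨K, hKdef⟩ : ∃ K : ℝ, K = 1/(ε*(2-ε)) := ⟨_, rfl⟩
  have hεε : 0 < ε*(2-ε) := by nlinarith
  have hεε1 : ε*(2-ε) ≤ 1 := by nlinarith [sq_nonneg (1-ε)]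
  have hK : 1 ≤ K := by rw [hKdef, le_div_iff₀ hεε]; linarith
  have hK0 : 0 < K := lt_of_lt_of_le one_pos hK
  have h1K : 1/K = ε*(2-ε) := by rw [hKdef]; field_simp
  have hg2 : ∀ t x : ℝ, 0 < t →
      1/K ≤ 1 - (deriv (u t) x)^2 ∧ 1 - (deriv (u t) x)^2 ≤ 1 := by
    intro t x ht
    have h := abs_le.1 (hgrad t x ht)
    constructor
    · rw [h1K]; nlinarith [h.1, h.2]
    · nlinarith [sq_nonneg (deriv (u t) x)]
  have hM0' : (0:ℝ) ≤ M := le_trans (abs_nonneg _) (hM 0 0 le_rfl)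
  -- negated solution
  have hdneg : ∀ t x : ℝ, deriv (fun y => -(u t y)) x = -(deriv (u t) x) := by
    intro t x
    exact deriv.neg
  have hddneg : ∀ t x : ℝ, deriv (deriv (fun y => -(u t y))) x = -(deriv (deriv (u t)) x) := by
    intro t x
    have h : deriv (fun y => -(u t y)) = fun y => -(deriv (u t) y) :=
      funext fun y => deriv.neg
    rw [h]
    exact deriv.neg
  -- main bound
  intro δ0 hδ0
  obtain ⟨R, hR⟩ := hdecay (δ0/2) (by linarith)
  obtain ⟨R', hR'⟩ : ∃ R' : ℝ, R' = max R 0 := ⟨_, rfl⟩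
  obtain ⟨C, hCdef⟩ : ∃ C : ℝ, C = (M+1) * Real.exp (R'^2/(4*K)) := ⟨_, rfl⟩
  have hC : 0 < C := by rw [hCdef]; positivity
  have hinitabs : ∀ x : ℝ, |u 0 x| ≤ δ0/2 + C * Real.exp (-(x^2)/(4*K)) := by
    intro x
    rcases le_or_gt R' |x| with h | h
    · have : |u 0 x| ≤ δ0/2 := hR x (le_trans (by rw [hR']; exact le_max_left _ _) h)
      have hpos : 0 < C * Real.exp (-(x^2)/(4*K)) := by positivity
      linarith
    · have hub : |u 0 x| ≤ M := hM 0 x le_rfl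
      have hxR : x^2 ≤ R'^2 := by
        have h0 : (0:ℝ) ≤ |x| := abs_nonneg x
        nlinarith [sq_abs x]
      have hexp : (1:ℝ) ≤ Real.exp ((R'^2 - x^2)/(4*K)) := by
        rw [show (1:ℝ) = Real.exp 0 from (Real.exp_zero).symm]
        apply Real.exp_le_exp.2
        exact div_nonneg (by linarith) (by positivity)
      have heq : C * Real.exp (-(x^2)/(4*K)) = (M+1) * Real.exp ((R'^2 - x^2)/(4*K)) := by
        rw [hCdef, mul_assoc, ← Real.exp_add]
        congr 2
        field_simp
        ring
      have : M ≤ C * Real.exp (-(x^2)/(4*K)) := by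
        rw [heq]
        nlinarith
      linarith
  have hinitu : ∀ x : ℝ, u 0 x ≤ δ0/2 + C * Real.exp (-(x^2)/(4*K)) :=
    fun x => le_trans (le_abs_self _) (hinitabs x)
  have hinitn : ∀ x : ℝ, -(u 0 x) ≤ δ0/2 + C * Real.exp (-(x^2)/(4*K)) :=
    fun x => le_trans (neg_le_abs _) (hinitabs x)
  -- apply comparison to u
  have hup : ∀ t x : ℝ, 0 ≤ t → u t x ≤ δ0/2 + C * phiB K t x := by
    intro t x ht
    exact mcf_upper u M C (δ0/2) K hK hcont0 hM hsmooth0 hg2 hpde (by linarith) hC hinitu ht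
  -- apply comparison to -u
  have hdn : ∀ t x : ℝ, 0 ≤ t → -(u t x) ≤ δ0/2 + C * phiB K t x := by
    intro t x ht
    refine mcf_upper (fun t x => -(u t x)) M C (δ0/2) K hK ?_ ?_ ?_ ?_ ?_
      (by linarith) hC ?_ ht
    · exact hcont0.neg
    · intro t x h
      rw [abs_neg]
      exact hM t x h
    · exact hsmooth0.neg
    · intro t x h
      simp only [hdneg]
      simpa [neg_pow] using hg2 t x h
    · intro t x h
      have hh := (hpde t x h).neg
      have he : deriv (deriv (fun y => -(u t y))) x /
          (1 - deriv (fun y => -(u t y)) x ^ 2)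
          = -(deriv (deriv (u t)) x / (1 - deriv (u t) x ^ 2)) := by
        rw [hddneg t x, hdneg t x, neg_pow]
        rw [neg_div]
        ring_nf
      rw [he]
      exact hh
    · exact hinitn
  -- choose T₀
  obtain ⟨T₀, hT₀def⟩ : ∃ T₀ : ℝ, T₀ = Real.exp (2*K*Real.log (C/(δ0/2))) := ⟨_, rfl⟩
  have hT₀pos : 0 < T₀ := by rw [hT₀def]; exact Real.exp_pos _
  refine ⟨T₀, fun t htT x => ?_⟩
  have ht0 : 0 ≤ t := le_trans hT₀pos.le htT
  have ht1 : 0 < t + 1 := by linarith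
  have hlog : 2*K*Real.log (C/(δ0/2)) ≤ Real.log (t+1) := by
    have h1 : T₀ ≤ t + 1 := by linarith
    calc 2*K*Real.log (C/(δ0/2)) = Real.log T₀ := by rw [hT₀def, Real.log_exp]
    _ ≤ Real.log (t+1) := Real.log_le_log hT₀pos h1
  have hbound : C * phiB K t x ≤ δ0/2 := by
    have h1 : phiB K t x ≤ Real.exp (-(Real.log (t+1) / (2*K))) := phiB_le K t x hK0 ht0
    have h2 : -(Real.log (t+1) / (2*K)) ≤ -(Real.log (C/(δ0/2))) := by
      rw [neg_le_neg_iff]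
      rw [le_div_iff₀ (by positivity : (0:ℝ) < 2*K)]
      linarith
    have h3 : Real.exp (-(Real.log (C/(δ0/2)))) = (δ0/2)/C := by
      rw [Real.exp_neg, Real.exp_log (by positivity), inv_div]
    have h4 : phiB K t x ≤ (δ0/2)/C := by
      calc phiB K t x ≤ Real.exp (-(Real.log (t+1) / (2*K))) := h1
      _ ≤ Real.exp (-(Real.log (C/(δ0/2)))) := Real.exp_le_exp.2 h2
      _ = (δ0/2)/C := h3
    calc C * phiB K t x ≤ C * ((δ0/2)/C) := mul_le_mul_of_nonneg_left h4 hC.le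
    _ = δ0/2 := by field_simp
  rw [abs_le]
  constructor
  · have := hdn t x ht0
    linarith
  · have := hup t x ht0
    linarith
end
end
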